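/- arXiv:2106.13428 — 6 statements merged into one kernel-verified Lean document; each statement's English description precedes it below -/
import Mathlib

section
/- For every v ∈ L²(Ω;H), the random variable E[δ·v | 𝓖] belongs to L²(Ω;H) and satisfies ‖E[δ·v | 𝓖]‖_{L²(Ω;H)} ≤ τ^{1/2} ‖v‖_{L²(Ω;H)}; equivalently, the operator 𝓘_τ satisfies ‖𝓘_τ v‖_{L²(Ω;H)} ≤ τ^{−1/2} ‖v‖_{L²(Ω;H)} for all v ∈ L²(Ω;H). -/
open MeasureTheory ProbabilityTheory
open scoped RealInnerProductSpace
open scoped ENNReal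

section Aux
variable {Ω : Type*} {mΩ : MeasurableSpace Ω} {μ : Measure Ω} [IsFiniteMeasure μ]
  {G : MeasurableSpace Ω}
  {H : Type*} [NormedAddCommGroup H] [InnerProductSpace ℝ H] [CompleteSpace H]
  [SecondCountableTopology H]

omit [SecondCountableTopology H] in
lemma my_condexp_const_inner (hG : G ≤ mΩ) {F : Ω → H} (hF : Integrable F μ) (c : H) :
    (fun ω => ⟪c, (μ[F|G]) ω⟫) =ᵐ[μ] μ[fun ω => ⟪c, F ω⟫|G] := by
  have hYint : Integrable (μ[F|G]) μ := integrable_condExp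
  have hmeas : AEStronglyMeasurable[G] (fun ω => ⟪c, (μ[F|G]) ω⟫) μ := by
    refine StronglyMeasurable.aestronglyMeasurable ?_
    exact ((innerSL ℝ c).continuous.comp_stronglyMeasurable stronglyMeasurable_condExp)
  refine ae_eq_condExp_of_forall_setIntegral_eq (g := fun ω => ⟪c, (μ[F|G]) ω⟫) hG
    (hF.const_inner (𝕜 := ℝ) c) (fun s _ _ => ?_) (fun s hs hμs => ?_) hmeas
  · exact (hYint.restrict (s := s)).const_inner (𝕜 := ℝ) c
  · rw [integral_inner (𝕜 := ℝ) (hYint.restrict (s := s)) c,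
      setIntegral_condExp hG hF hs, ← integral_inner (𝕜 := ℝ) (hF.restrict (s := s)) c]

lemma my_norm_condexp_le (hG : G ≤ mΩ) {F : Ω → H} (hF : Integrable F μ) :
    ∀ᵐ ω ∂μ, ‖(μ[F|G]) ω‖ ≤ (μ[fun ω => ‖F ω‖|G]) ω := by
  obtain ⟨D, hDc, hDd⟩ := TopologicalSpace.exists_countable_dense H
  have hN0 : 0 ≤ᵐ[μ] μ[fun ω => ‖F ω‖|G] :=
    condExp_nonneg (Filter.Eventually.of_forall fun ω => norm_nonneg _)
  have key : ∀ c : H, ∀ᵐ ω ∂μ, ⟪c, (μ[F|G]) ω⟫ ≤ ‖c‖ * (μ[fun ω => ‖F ω‖|G]) ω := by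
    intro c
    have h1 := my_condexp_const_inner hG hF c
    have h2 : μ[fun ω => ⟪c, F ω⟫|G] ≤ᵐ[μ] μ[fun ω => ‖c‖ * ‖F ω‖|G] :=
      condExp_mono (hF.const_inner (𝕜 := ℝ) c) (hF.norm.const_mul ‖c‖)
        (Filter.Eventually.of_forall fun ω => real_inner_le_norm c (F ω))
    have h3 : μ[fun ω => ‖c‖ * ‖F ω‖|G] =ᵐ[μ] fun ω => ‖c‖ * (μ[fun ω => ‖F ω‖|G]) ω := by
      simpa [Pi.smul_def, smul_eq_mul] using condExp_smul (μ := μ) (m := G) ‖c‖ (fun ω => ‖F ω‖)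
    filter_upwards [h1, h2, h3] with ω e1 e2 e3
    calc ⟪c, (μ[F|G]) ω⟫ = (μ[fun ω => ⟪c, F ω⟫|G]) ω := e1
      _ ≤ (μ[fun ω => ‖c‖ * ‖F ω‖|G]) ω := e2
      _ = ‖c‖ * (μ[fun ω => ‖F ω‖|G]) ω := e3
  have hall : ∀ᵐ ω ∂μ, ∀ c ∈ D, ⟪c, (μ[F|G]) ω⟫ ≤ ‖c‖ * (μ[fun ω => ‖F ω‖|G]) ω :=
    (ae_ball_iff hDc).mpr fun c _ => key c
  filter_upwards [hall, hN0] with ω hω hN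
  set y := (μ[F|G]) ω with hy
  set n := (μ[fun ω => ‖F ω‖|G]) ω with hn
  have hC : IsClosed {c : H | ⟪c, y⟫ ≤ ‖c‖ * n} :=
    isClosed_le (continuous_id.inner continuous_const) (continuous_norm.mul continuous_const)
  have hco : ∀ c : H, ⟪c, y⟫ ≤ ‖c‖ * n := by
    intro c
    have hsub := closure_minimal (fun d hd => hω d hd) hC
    rw [hDd.closure_eq] at hsub
    exact hsub (Set.mem_univ c)
  rcases eq_or_lt_of_le (norm_nonneg y) with h0 | h0
  · rw [← h0]; exact hN
  · have := hco y
    rw [real_inner_self_eq_norm_mul_norm] at this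
    exact le_of_mul_le_mul_left this h0
end Aux

/-- For every `v ∈ L²(Ω;H)`, the conditional expectation `E[δ·v | 𝓖]`
belongs to `L²(Ω;H)` with `‖E[δ·v|𝓖]‖_{L²} ≤ τ^{1/2} ‖v‖_{L²}`; equivalently the operator
`𝓘_τ v := τ⁻¹ E[δ·v|𝓖]` satisfies `‖𝓘_τ v‖_{L²} ≤ τ^{-1/2} ‖v‖_{L²}`. -/
theorem stmt0
    {Ω : Type*} {mΩ : MeasurableSpace Ω} {μ : Measure Ω} [IsProbabilityMeasure μ]
    {G : MeasurableSpace Ω} (hG : G ≤ mΩ)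
    {H : Type*} [NormedAddCommGroup H] [InnerProductSpace ℝ H] [CompleteSpace H]
    [SecondCountableTopology H]
    (τ : ℝ) (hτ : 0 < τ)
    (δ : Ω → ℝ) (hδ : MemLp δ 2 μ)
    (hind : Indep (MeasurableSpace.comap δ inferInstance) G μ)
    (hmean : ∫ ω, δ ω ∂μ = 0) (hvar : ∫ ω, (δ ω) ^ 2 ∂μ = τ)
    (v : Ω → H) (hv : MemLp v 2 μ) :
    MemLp (μ[fun ω => δ ω • v ω | G]) 2 μ ∧
    (∫ ω, ‖(μ[fun ω => δ ω • v ω | G]) ω‖ ^ 2 ∂μ) ^ (1 / 2 : ℝ) ≤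
      τ ^ (1 / 2 : ℝ) * (∫ ω, ‖v ω‖ ^ 2 ∂μ) ^ (1 / 2 : ℝ) ∧
    (∫ ω, ‖(τ⁻¹ • μ[fun ω => δ ω • v ω | G]) ω‖ ^ 2 ∂μ) ^ (1 / 2 : ℝ) ≤
      τ ^ (-(1 / 2) : ℝ) * (∫ ω, ‖v ω‖ ^ 2 ∂μ) ^ (1 / 2 : ℝ) := by
  have h11 : (1 : ℝ≥0∞) / 1 = 1 / 2 + 1 / 2 := by
    rw [ENNReal.div_add_div_same, one_add_one_eq_two,
      ENNReal.div_self two_ne_zero ENNReal.ofNat_ne_top, div_one]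
  -- integrability facts
  have hFint : Integrable (fun ω => δ ω • v ω) μ :=
    memLp_one_iff_integrable.mp (hv.smul hδ (hpqr := ⟨by simp only [← one_div]; exact h11.symm⟩))
  have habs : MemLp (fun ω => |δ ω| * ‖v ω‖) 1 μ := by
    have := (hv.norm.smul hδ.norm (r := 1) (hpqr := ⟨by simp only [← one_div]; exact h11.symm⟩))
    simpa [Pi.smul_def, Pi.mul_def, Pi.smul_apply, smul_eq_mul, Real.norm_eq_abs] using this
  have hA_int : Integrable (fun ω => |δ ω| * ‖v ω‖) μ := memLp_one_iff_integrable.mp habs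
  have hB_int : Integrable (fun ω => ‖v ω‖ ^ 2) μ :=
    (memLp_two_iff_integrable_sq_norm hv.1).mp hv
  have hT_int : Integrable (fun ω => δ ω ^ 2) μ := hδ.integrable_sq
  -- conditional expectation of δ² is the constant τ
  obtain ⟨δ', hδ'sm, hδ'ae⟩ := hδ.1
  have hδ'meas : Measurable[mΩ] δ' := hδ'sm.measurable
  have hle₁ : MeasurableSpace.comap δ' inferInstance ≤ mΩ := hδ'meas.comap_le
  have hInd' : Indep (MeasurableSpace.comap δ' inferInstance) G μ := by
    rw [Indep_iff] at hind ⊢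
    rintro t1 t2 ⟨B, hB, rfl⟩ ht2
    have hpre : δ' ⁻¹' B =ᵐ[μ] δ ⁻¹' B :=
      hδ'ae.mono fun ω h => by show (δ' ω ∈ B) = (δ ω ∈ B); rw [h]
    rw [measure_congr (hpre.inter (ae_eq_refl t2)), measure_congr hpre]
    exact hind _ t2 ⟨B, hB, rfl⟩ ht2
  have hsm : StronglyMeasurable[MeasurableSpace.comap δ' inferInstance]
      (fun ω => δ' ω ^ 2) := by
    have hm' : Measurable[MeasurableSpace.comap δ' inferInstance] δ' :=
      measurable_iff_comap_le.mpr le_rfl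
    exact (hm'.pow_const 2).stronglyMeasurable
  have hsq_ae : (fun ω => δ ω ^ 2) =ᵐ[μ] fun ω => δ' ω ^ 2 := hδ'ae.mono fun ω h => by dsimp only; rw [h]
  have hvar' : ∫ ω, δ' ω ^ 2 ∂μ = τ := by
    rw [← hvar]; exact integral_congr_ae hsq_ae.symm
  have hTconst : μ[fun ω => δ ω ^ 2|G] =ᵐ[μ] fun _ => τ := by
    calc μ[fun ω => δ ω ^ 2|G] =ᵐ[μ] μ[fun ω => δ' ω ^ 2|G] := condExp_congr_ae hsq_ae
      _ =ᵐ[μ] fun _ => ∫ ω, δ' ω ^ 2 ∂μ := condExp_indep_eq hle₁ hG hsm hInd'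
      _ = fun _ => τ := by rw [hvar']
  set A := μ[fun ω => |δ ω| * ‖v ω‖|G] with hA
  set B := μ[fun ω => ‖v ω‖ ^ 2|G] with hB
  have hAnn : 0 ≤ᵐ[μ] A :=
    condExp_nonneg (Filter.Eventually.of_forall fun ω => mul_nonneg (abs_nonneg _) (norm_nonneg _))
  have hBnn : 0 ≤ᵐ[μ] B :=
    condExp_nonneg (Filter.Eventually.of_forall fun ω => sq_nonneg _)
  -- quadratic inequality for each rational
  have hq : ∀ q : ℚ, ∀ᵐ ω ∂μ,
      0 ≤ (μ[fun ω => δ ω ^ 2|G]) ω + ((-(2 * (q : ℝ))) * A ω + (q : ℝ) ^ 2 * B ω) := by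
    intro q
    have hdecomp : (fun ω => (|δ ω| - (q : ℝ) * ‖v ω‖) ^ 2)
        = (fun ω => δ ω ^ 2) + ((-(2 * (q : ℝ))) • (fun ω => |δ ω| * ‖v ω‖)
            + ((q : ℝ) ^ 2) • (fun ω => ‖v ω‖ ^ 2)) := by
      funext ω
      simp only [Pi.add_apply, Pi.smul_apply, smul_eq_mul]
      have h := sq_abs (δ ω)
      nlinarith [h]
    have hnonneg : 0 ≤ᵐ[μ] μ[fun ω => (|δ ω| - (q : ℝ) * ‖v ω‖) ^ 2|G] :=
      condExp_nonneg (Filter.Eventually.of_forall fun ω => sq_nonneg _)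
    have hint2 : Integrable ((-(2 * (q : ℝ))) • (fun ω => |δ ω| * ‖v ω‖)
        + ((q : ℝ) ^ 2) • (fun ω => ‖v ω‖ ^ 2)) μ :=
      (hA_int.smul _).add (hB_int.smul _)
    have e1 : μ[fun ω => (|δ ω| - (q : ℝ) * ‖v ω‖) ^ 2|G] =ᵐ[μ]
        fun ω => (μ[fun ω => δ ω ^ 2|G]) ω + ((-(2 * (q : ℝ))) * A ω + (q : ℝ) ^ 2 * B ω) := by
      rw [hdecomp]
      have e2 := condExp_add (μ := μ) (m := G) hT_int hint2
      have e3 := condExp_add (μ := μ) (m := G) (hA_int.smul (-(2 * (q : ℝ))))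
        (hB_int.smul ((q : ℝ) ^ 2))
      have e4 := condExp_smul (μ := μ) (m := G) (-(2 * (q : ℝ))) (fun ω => |δ ω| * ‖v ω‖)
      have e5 := condExp_smul (μ := μ) (m := G) ((q : ℝ) ^ 2) (fun ω => ‖v ω‖ ^ 2)
      filter_upwards [e2, e3, e4, e5] with ω h2 h3 h4 h5
      simp only [Pi.add_apply, Pi.smul_apply, smul_eq_mul] at h2 h3 h4 h5 ⊢
      rw [h2, h3, h4, h5]
    filter_upwards [hnonneg, e1] with ω h1 h2
    rw [← h2]; exact h1
  -- conditional Cauchy-Schwarz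
  have hCS : ∀ᵐ ω ∂μ, (A ω) ^ 2 ≤ τ * B ω := by
    filter_upwards [ae_all_iff.mpr hq, hTconst] with ω hω hT
    have hr : ∀ x : ℝ, 0 ≤ B ω * (x * x) + (-(2 * A ω)) * x + τ := by
      have hcl : IsClosed {x : ℝ | 0 ≤ B ω * (x * x) + (-(2 * A ω)) * x + τ} := by
        apply isClosed_le continuous_const
        continuity
      have hsub : Set.range ((↑) : ℚ → ℝ) ⊆ {x : ℝ | 0 ≤ B ω * (x * x) + (-(2 * A ω)) * x + τ} := by
        rintro _ ⟨q, rfl⟩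
        have h := hω q
        rw [hT] at h
        simp only [Set.mem_setOf_eq]
        nlinarith [h]
      intro x
      have hclosure := closure_minimal hsub hcl
      rw [Rat.denseRange_cast.closure_eq] at hclosure
      exact hclosure (Set.mem_univ x)
    have hd := discrim_le_zero hr
    rw [discrim] at hd
    nlinarith [hd]
  -- norm of condexp bounded by A
  set Y := μ[fun ω => δ ω • v ω|G] with hY
  have hK1 : ∀ᵐ ω ∂μ, ‖Y ω‖ ≤ A ω := by
    have h := my_norm_condexp_le hG hFint
    have heq : (fun ω => ‖δ ω • v ω‖) = fun ω => |δ ω| * ‖v ω‖ :=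
      funext fun ω => by rw [norm_smul, Real.norm_eq_abs]
    rw [heq] at h
    exact h
  have hsq : ∀ᵐ ω ∂μ, ‖Y ω‖ ^ 2 ≤ τ * B ω := by
    filter_upwards [hK1, hCS] with ω h1 h2
    calc ‖Y ω‖ ^ 2 ≤ (A ω) ^ 2 := pow_le_pow_left₀ (norm_nonneg _) h1 2
      _ ≤ τ * B ω := h2
  have hYmeas : AEStronglyMeasurable[mΩ] Y μ :=
    (stronglyMeasurable_condExp.mono hG).aestronglyMeasurable
  have hτBint : Integrable (fun ω => τ * B ω) μ := integrable_condExp.const_mul τ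
  have hYsq_int : Integrable (fun ω => ‖Y ω‖ ^ 2) μ := by
    refine Integrable.mono' hτBint
      ((hYmeas.norm.aemeasurable.pow_const 2).aestronglyMeasurable) ?_
    filter_upwards [hsq] with ω h
    rwa [Real.norm_eq_abs, abs_of_nonneg (sq_nonneg _)]
  have hY2 : MemLp Y 2 μ := (memLp_two_iff_integrable_sq_norm hYmeas).mpr hYsq_int
  have hI : ∫ ω, ‖Y ω‖ ^ 2 ∂μ ≤ τ * ∫ ω, ‖v ω‖ ^ 2 ∂μ := by
    have h1 : ∫ ω, ‖Y ω‖ ^ 2 ∂μ ≤ ∫ ω, τ * B ω ∂μ :=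
      integral_mono_ae hYsq_int hτBint hsq
    have h2 : ∫ ω, τ * B ω ∂μ = τ * ∫ ω, B ω ∂μ := integral_const_mul τ _
    have h3 : ∫ ω, B ω ∂μ = ∫ ω, ‖v ω‖ ^ 2 ∂μ := integral_condExp hG
    rw [h2, h3] at h1
    exact h1
  have hv2nn : 0 ≤ ∫ ω, ‖v ω‖ ^ 2 ∂μ := integral_nonneg fun ω => sq_nonneg _
  have hY2nn : 0 ≤ ∫ ω, ‖Y ω‖ ^ 2 ∂μ := integral_nonneg fun ω => sq_nonneg _
  have c2 : (∫ ω, ‖Y ω‖ ^ 2 ∂μ) ^ (1 / 2 : ℝ) ≤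
      τ ^ (1 / 2 : ℝ) * (∫ ω, ‖v ω‖ ^ 2 ∂μ) ^ (1 / 2 : ℝ) := by
    rw [← Real.mul_rpow hτ.le hv2nn]
    exact Real.rpow_le_rpow hY2nn hI (by norm_num)
  refine ⟨hY2, c2, ?_⟩
  have hτinv : (0 : ℝ) ≤ τ⁻¹ := inv_nonneg.mpr hτ.le
  have hYscale : ∀ ω, ‖(τ⁻¹ • Y) ω‖ ^ 2 = τ⁻¹ ^ 2 * ‖Y ω‖ ^ 2 := fun ω => by
    simp [Pi.smul_apply, norm_smul, Real.norm_eq_abs, abs_of_nonneg hτinv, mul_pow]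
  have hint : ∫ ω, ‖(τ⁻¹ • Y) ω‖ ^ 2 ∂μ = τ⁻¹ ^ 2 * ∫ ω, ‖Y ω‖ ^ 2 ∂μ := by
    simp_rw [hYscale]; exact integral_const_mul _ _
  have hhalf : ((τ⁻¹ : ℝ) ^ 2) ^ (1 / 2 : ℝ) = τ⁻¹ := by
    rw [← Real.rpow_natCast τ⁻¹ 2, ← Real.rpow_mul hτinv]
    norm_num
  have hconst : τ⁻¹ * τ ^ (1 / 2 : ℝ) = τ ^ (-(1 / 2) : ℝ) := by
    rw [← Real.rpow_neg_one τ, ← Real.rpow_add hτ]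
    norm_num
  calc (∫ ω, ‖(τ⁻¹ • Y) ω‖ ^ 2 ∂μ) ^ (1 / 2 : ℝ)
      = (τ⁻¹ ^ 2 * ∫ ω, ‖Y ω‖ ^ 2 ∂μ) ^ (1 / 2 : ℝ) := by rw [hint]
    _ = (τ⁻¹ ^ 2) ^ (1 / 2 : ℝ) * (∫ ω, ‖Y ω‖ ^ 2 ∂μ) ^ (1 / 2 : ℝ) :=
        Real.mul_rpow (sq_nonneg _) hY2nn
    _ = τ⁻¹ * (∫ ω, ‖Y ω‖ ^ 2 ∂μ) ^ (1 / 2 : ℝ) := by rw [hhalf]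
    _ ≤ τ⁻¹ * (τ ^ (1 / 2 : ℝ) * (∫ ω, ‖v ω‖ ^ 2 ∂μ) ^ (1 / 2 : ℝ)) :=
        mul_le_mul_of_nonneg_left c2 hτinv
    _ = τ ^ (-(1 / 2) : ℝ) * (∫ ω, ‖v ω‖ ^ 2 ∂μ) ^ (1 / 2 : ℝ) := by
        rw [← mul_assoc, hconst]
end

section
/- For every v ∈ L²(Ω;H) and every w ∈ L²(Ω,𝓖;H), one has the orthogonality relation E⟨v − δ·𝓘_τ v, δ·w⟩_H = 0. -/
open MeasureTheory ProbabilityTheory Filter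
open scoped RealInnerProductSpace Topology

section Aux

variable {Ω : Type*} {mΩ : MeasurableSpace Ω} {μ : Measure Ω} [IsProbabilityMeasure μ]
  {G : MeasurableSpace Ω}
  {H : Type*} [NormedAddCommGroup H] [InnerProductSpace ℝ H] [CompleteSpace H]
  [SecondCountableTopology H]

lemma aux_integrable_mul {f g : Ω → ℝ} (hf : MemLp f 2 μ) (hg : MemLp g 2 μ) :
    Integrable (fun ω => f ω * g ω) μ := by
  refine Integrable.mono' (((hf.integrable_sq).add (hg.integrable_sq)).div_const 2)
    (hf.aestronglyMeasurable.mul hg.aestronglyMeasurable)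
    (Filter.Eventually.of_forall fun ω => ?_)
  simp only [Pi.add_apply]
  rw [Real.norm_eq_abs, abs_mul]
  nlinarith [sq_nonneg (|f ω| - |g ω|), sq_abs (f ω), sq_abs (g ω), abs_nonneg (f ω),
    abs_nonneg (g ω)]

lemma aux_integrable_inner {f g : Ω → H} (hf : MemLp f 2 μ) (hg : MemLp g 2 μ) :
    Integrable (fun ω => ⟪f ω, g ω⟫) μ := by
  refine Integrable.mono' (aux_integrable_mul hf.norm hg.norm)
    (hf.aestronglyMeasurable.inner hg.aestronglyMeasurable)
    (Filter.Eventually.of_forall fun ω => ?_)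
  exact (norm_inner_le_norm _ _)

lemma condexp_clm_comm (hG : G ≤ mΩ) {E F : Type*} [NormedAddCommGroup E] [NormedSpace ℝ E]
    [CompleteSpace E] [NormedAddCommGroup F] [NormedSpace ℝ F] [CompleteSpace F]
    (T : E →L[ℝ] F) {X : Ω → E} (hX : Integrable X μ) :
    (fun ω => T ((μ[X|G]) ω)) =ᵐ[μ] μ[fun ω => T (X ω)|G] := by
  letI : MeasurableSpace Ω := mΩ
  refine ae_eq_condExp_of_forall_setIntegral_eq hG (T.integrable_comp hX)
    (fun s _ _ => (T.integrable_comp integrable_condExp).integrableOn)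
    (fun s hs _ => ?_)
    ((T.continuous.comp_stronglyMeasurable stronglyMeasurable_condExp).aestronglyMeasurable)
  rw [T.integral_comp_comm integrable_condExp.integrableOn,
    T.integral_comp_comm hX.integrableOn, setIntegral_condExp hG hX hs]

lemma condexp_norm_jensen (hG : G ≤ mΩ) {X : Ω → H} (hX : Integrable X μ) :
    ∀ᵐ ω ∂μ, ‖(μ[X|G]) ω‖ ≤ (μ[fun ω => ‖X ω‖|G]) ω := by
  haveI : Nonempty H := ⟨0⟩
  set x : ℕ → H := TopologicalSpace.denseSeq H with hx
  have hdense : DenseRange x := TopologicalSpace.denseRange_denseSeq H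
  have key : ∀ n : ℕ, ∀ᵐ ω ∂μ,
      ⟪x n, (μ[X|G]) ω⟫ ≤ ‖x n‖ * (μ[fun ω => ‖X ω‖|G]) ω := by
    intro n
    have h1 := condexp_clm_comm (μ := μ) hG (innerSL ℝ (x n)) hX
    have hint : Integrable (fun ω => (innerSL ℝ (x n)) (X ω)) μ :=
      (innerSL ℝ (x n)).integrable_comp hX
    have h2 : μ[fun ω => (innerSL ℝ (x n)) (X ω)|G]
        ≤ᵐ[μ] μ[fun ω => ‖x n‖ * ‖X ω‖|G] :=
      condExp_mono hint (hX.norm.const_mul _)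
        (Filter.Eventually.of_forall fun ω => by
          simpa using real_inner_le_norm (x n) (X ω))
    have h3 : μ[fun ω => ‖x n‖ * ‖X ω‖|G]
        =ᵐ[μ] fun ω => ‖x n‖ * (μ[fun ω => ‖X ω‖|G]) ω := by
      have h := condExp_smul (μ := μ) (m := G) (‖x n‖) (fun ω => ‖X ω‖)
      exact h
    filter_upwards [h1, h2, h3] with ω e1 e2 e3
    calc ⟪x n, (μ[X|G]) ω⟫ = (innerSL ℝ (x n)) ((μ[X|G]) ω) := by simp
    _ = (μ[fun ω => (innerSL ℝ (x n)) (X ω)|G]) ω := e1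
    _ ≤ (μ[fun ω => ‖x n‖ * ‖X ω‖|G]) ω := e2
    _ = ‖x n‖ * (μ[fun ω => ‖X ω‖|G]) ω := e3
  have hnonneg : ∀ᵐ ω ∂μ, 0 ≤ (μ[fun ω => ‖X ω‖|G]) ω :=
    condExp_nonneg (Filter.Eventually.of_forall fun ω => norm_nonneg _)
  rw [← ae_all_iff] at key
  filter_upwards [key, hnonneg] with ω hω hN
  set y := (μ[X|G]) ω with hy
  set N := (μ[fun ω => ‖X ω‖|G]) ω with hNdef
  have hS : IsClosed {z : H | ⟪z, y⟫ ≤ ‖z‖ * N} :=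
    isClosed_le (continuous_id.inner continuous_const) (continuous_norm.mul continuous_const)
  have hyS : y ∈ {z : H | ⟪z, y⟫ ≤ ‖z‖ * N} := by
    have hsub : Set.range x ⊆ {z : H | ⟪z, y⟫ ≤ ‖z‖ * N} := by
      rintro _ ⟨n, rfl⟩; exact hω n
    have hcl := hS.closure_subset_iff.mpr hsub
    apply hcl
    rw [hdense.closure_range]
    trivial
  have hyy : ⟪y, y⟫ ≤ ‖y‖ * N := hyS
  rw [real_inner_self_eq_norm_mul_norm] at hyy
  nlinarith [norm_nonneg y]

lemma rat_am_gm {a b t : ℝ} (ha : 0 ≤ a) (hb : 0 ≤ b) (ht : 0 < t)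
    (h : ∀ q : ℚ, 0 < q → a ≤ ((q : ℝ) * t + b / q) / 2) : a ^ 2 ≤ t * b := by
  rcases eq_or_lt_of_le hb with hb0 | hb0
  · have ha0 : a ≤ 0 := by
      by_contra h'
      push_neg at h'
      obtain ⟨q, h1, h2⟩ := exists_rat_btwn (show (0:ℝ) < 2 * a / t by positivity)
      have hq0 : 0 < q := by exact_mod_cast h1
      have hq := h q hq0
      rw [← hb0] at hq
      have h3 : (q : ℝ) * t < 2 * a := by
        have := (lt_div_iff₀ ht).mp h2
        linarith
      simp only [zero_div, add_zero] at hq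
      linarith
    have : a = 0 := le_antisymm ha0 ha
    rw [this]
    have : (0:ℝ) ^ 2 = 0 := by norm_num
    rw [this]
    positivity
  · have key : a ≤ Real.sqrt (t * b) := by
      by_contra h'
      push_neg at h'
      set s := Real.sqrt (b / t) with hs
      have hs0 : 0 < s := Real.sqrt_pos.mpr (by positivity)
      have h1 : s * t = Real.sqrt (t * b) := by
        have e : t * b = b / t * t ^ 2 := by field_simp
        rw [e, Real.sqrt_mul (by positivity), Real.sqrt_sq ht.le]
      have h2 : b / s = Real.sqrt (t * b) := by
        rw [eq_comm, eq_div_iff hs0.ne', hs,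
          ← Real.sqrt_mul (by positivity : (0:ℝ) ≤ t * b),
          show t * b * (b / t) = b ^ 2 by field_simp, Real.sqrt_sq hb0.le]
      have hval : (s * t + b / s) / 2 = Real.sqrt (t * b) := by rw [h1, h2]; ring
      have hcont : ContinuousAt (fun z : ℝ => (z * t + b / z) / 2) s := by
        apply ContinuousAt.div_const
        exact ((continuousAt_id.mul continuousAt_const).add
          (continuousAt_const.div continuousAt_id hs0.ne'))
      have hval' : (s * t + b / s) / 2 < a := by rw [hval]; exact h'
      have hev : ∀ᶠ z in 𝓝 s, (z * t + b / z) / 2 < a :=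
        Filter.Tendsto.eventually_lt_const hval' hcont
      rw [Metric.eventually_nhds_iff] at hev
      obtain ⟨ε, hε0, hε⟩ := hev
      obtain ⟨q, hq1, hq2⟩ := exists_rat_btwn (show s < s + ε by linarith)
      have hq0 : 0 < q := by
        have : (0:ℝ) < q := lt_trans hs0 hq1
        exact_mod_cast this
      have hdist : dist (q : ℝ) s < ε := by
        rw [Real.dist_eq, abs_of_pos (by linarith)]
        linarith
      have := hε hdist
      have := h q hq0
      linarith
    calc a ^ 2 ≤ Real.sqrt (t * b) ^ 2 := by
          apply pow_le_pow_left₀ ha key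
    _ = t * b := Real.sq_sqrt (by positivity)


lemma pairing_bdd (hG : G ≤ mΩ) {X : Ω → H} (hX : Integrable X μ)
    {φ : Ω → H} (hφ : StronglyMeasurable[G] φ) {C : ℝ} (hC : ∀ ω, ‖φ ω‖ ≤ C) :
    ∫ ω, ⟪X ω, φ ω⟫ ∂μ = ∫ ω, ⟪(μ[X|G]) ω, φ ω⟫ ∂μ := by
  -- integrability of pairings with simple functions
  have key : ∀ {Y : Ω → H}, Integrable Y μ → ∀ ψ : @SimpleFunc Ω G H,
      Integrable (fun ω => ⟪Y ω, ψ ω⟫) μ := by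
    intro Y hY ψ
    obtain ⟨D, hD⟩ := ψ.exists_forall_norm_le
    refine Integrable.mono' (hY.norm.mul_const D)
      (hY.aestronglyMeasurable.inner ((ψ.stronglyMeasurable.mono hG).aestronglyMeasurable))
      (Filter.Eventually.of_forall fun ω => ?_)
    exact (norm_inner_le_norm _ _).trans
      (mul_le_mul_of_nonneg_left (hD ω) (norm_nonneg _))
  have hsimple : ∀ ψ : @SimpleFunc Ω G H,
      ∫ ω, ⟪X ω, ψ ω⟫ ∂μ = ∫ ω, ⟪(μ[X|G]) ω, ψ ω⟫ ∂μ := by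
    intro ψ
    induction ψ using MeasureTheory.SimpleFunc.induction with
    | const c hs =>
      rename_i s
      have hcoe : ∀ (Y : Ω → H) (ω : Ω),
          ⟪Y ω, (SimpleFunc.piecewise s hs (SimpleFunc.const Ω c)
            (SimpleFunc.const Ω (0 : H))) ω⟫
          = s.indicator (fun ω => ⟪Y ω, c⟫) ω := by
        intro Y ω
        by_cases h : ω ∈ s <;>
          simp [SimpleFunc.coe_piecewise, Set.piecewise, h, Set.indicator_apply]
      have comp : ∀ {Y : Ω → H}, Integrable Y μ →
          ∫ ω, s.indicator (fun ω => ⟪Y ω, c⟫) ω ∂μ = ⟪c, ∫ ω in s, Y ω ∂μ⟫ := by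
        intro Y hY
        letI : MeasurableSpace Ω := mΩ
        rw [integral_indicator (hG s hs),
          show (fun ω => ⟪Y ω, c⟫) = fun ω => ⟪c, Y ω⟫ from
            funext fun ω => real_inner_comm _ _]
        exact integral_inner hY.integrableOn c
      rw [integral_congr_ae (Filter.Eventually.of_forall (hcoe X)),
        integral_congr_ae (Filter.Eventually.of_forall (hcoe (μ[X|G]))),
        comp hX, comp integrable_condExp, setIntegral_condExp hG hX hs]
    | add hdisj hf hg =>
      rename_i f g
      have e : ∀ Y : Ω → H, (fun ω => ⟪Y ω, (f + g) ω⟫)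
          = fun ω => ⟪Y ω, f ω⟫ + ⟪Y ω, g ω⟫ :=
        fun Y => funext fun ω => by
          rw [SimpleFunc.coe_add, Pi.add_apply, inner_add_right]
      rw [show (∫ ω, ⟪X ω, (f + g) ω⟫ ∂μ) = ∫ ω, (⟪X ω, f ω⟫ + ⟪X ω, g ω⟫) ∂μ from by
          rw [← e X],
        show (∫ ω, ⟪(μ[X|G]) ω, (f + g) ω⟫ ∂μ)
            = ∫ ω, (⟪(μ[X|G]) ω, f ω⟫ + ⟪(μ[X|G]) ω, g ω⟫) ∂μ from by
          rw [← e (μ[X|G])],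
        integral_add (key hX f) (key hX g),
        integral_add (key integrable_condExp f) (key integrable_condExp g), hf, hg]
  -- approximation by simple functions
  set C' := max C 0 with hC'def
  have hC' : ∀ ω, ‖φ ω‖ ≤ C' := fun ω => (hC ω).trans (le_max_left _ _)
  have hC'0 : (0:ℝ) ≤ C' := le_max_right _ _
  set ψ : ℕ → @SimpleFunc Ω G H := hφ.approxBounded C' with hψdef
  have htend : ∀ ω, Filter.Tendsto (fun n => ψ n ω) Filter.atTop (𝓝 (φ ω)) :=
    fun ω => hφ.tendsto_approxBounded_of_norm_le (hC' ω)
  have hψ_norm : ∀ n ω, ‖ψ n ω‖ ≤ C' := fun n ω => hφ.norm_approxBounded_le hC'0 n ω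
  have lim1 : Filter.Tendsto (fun n => ∫ ω, ⟪X ω, ψ n ω⟫ ∂μ) Filter.atTop
      (𝓝 (∫ ω, ⟪X ω, φ ω⟫ ∂μ)) := by
    refine tendsto_integral_of_dominated_convergence (fun ω => ‖X ω‖ * C')
      (fun n => hX.aestronglyMeasurable.inner
        (((ψ n).stronglyMeasurable.mono hG).aestronglyMeasurable))
      (hX.norm.mul_const C')
      (fun n => Filter.Eventually.of_forall fun ω =>
        (norm_inner_le_norm _ _).trans
          (mul_le_mul_of_nonneg_left (hψ_norm n ω) (norm_nonneg _)))
      (Filter.Eventually.of_forall fun ω => Filter.Tendsto.inner tendsto_const_nhds (htend ω))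
  have lim2 : Filter.Tendsto (fun n => ∫ ω, ⟪(μ[X|G]) ω, ψ n ω⟫ ∂μ) Filter.atTop
      (𝓝 (∫ ω, ⟪(μ[X|G]) ω, φ ω⟫ ∂μ)) := by
    refine tendsto_integral_of_dominated_convergence (fun ω => ‖(μ[X|G]) ω‖ * C')
      (fun n => integrable_condExp.aestronglyMeasurable.inner
        (((ψ n).stronglyMeasurable.mono hG).aestronglyMeasurable))
      (integrable_condExp.norm.mul_const C')
      (fun n => Filter.Eventually.of_forall fun ω =>
        (norm_inner_le_norm _ _).trans
          (mul_le_mul_of_nonneg_left (hψ_norm n ω) (norm_nonneg _)))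
      (Filter.Eventually.of_forall fun ω => Filter.Tendsto.inner tendsto_const_nhds (htend ω))
  exact tendsto_nhds_unique (Filter.Tendsto.congr (fun n => hsimple (ψ n)) lim1) lim2

end Aux

/-- For every `v ∈ L²(Ω;H)` and every `w ∈ L²(Ω,𝓖;H)`, one has the
orthogonality relation `E⟨v − δ·𝓘_τ v, δ·w⟩_H = 0`, where `𝓘_τ v := τ⁻¹ E[δ·v | 𝓖]`. -/
theorem stmt3
    {Ω : Type*} {mΩ : MeasurableSpace Ω} {μ : Measure Ω} [IsProbabilityMeasure μ]
    {G : MeasurableSpace Ω} (hG : G ≤ mΩ)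
    {H : Type*} [NormedAddCommGroup H] [InnerProductSpace ℝ H] [CompleteSpace H]
    [SecondCountableTopology H]
    (τ : ℝ) (hτ : 0 < τ)
    (δ : Ω → ℝ) (hδ : MemLp δ 2 μ)
    (hind : Indep (MeasurableSpace.comap δ inferInstance) G μ)
    (hmean : ∫ ω, δ ω ∂μ = 0) (hvar : ∫ ω, (δ ω) ^ 2 ∂μ = τ)
    (v : Ω → H) (hv : MemLp v 2 μ)
    (w : Ω → H) (hw : MemLp w 2 μ) (hwG : AEStronglyMeasurable[G] w μ) :
    ∫ ω, ⟪v ω - δ ω • (τ⁻¹ • μ[fun ω' => δ ω' • v ω' | G]) ω, δ ω • w ω⟫ ∂μ = 0 := by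
  have hτ0 : τ ≠ 0 := ne_of_gt hτ
  set X : Ω → H := fun ω => δ ω • v ω with hX_def
  set u : Ω → H := μ[X|G] with hu_def
  obtain ⟨w', hw'_sm, hww'⟩ := hwG
  have hw' : MemLp w' 2 μ := hw.ae_eq hww'
  have hδae := hδ.aestronglyMeasurable
  have hvae := hv.aestronglyMeasurable
  have hXint : Integrable X μ := by
    refine Integrable.mono' (aux_integrable_mul hδ.norm hv.norm) (hδae.smul hvae)
      (Filter.Eventually.of_forall fun ω => ?_)
    rw [norm_smul]
  -- independence plumbing
  have hδ_comap : MeasurableSpace.comap (fun ω => δ ω ^ 2) inferInstance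
      ≤ MeasurableSpace.comap δ inferInstance := by
    rw [show (fun ω => δ ω ^ 2) = (fun x : ℝ => x ^ 2) ∘ δ from rfl,
      ← MeasurableSpace.comap_comp]
    exact MeasurableSpace.comap_mono ((continuous_pow 2).measurable.comap_le)
  have hindep_base : ∀ {g : Ω → ℝ}, Measurable[G] g →
      IndepFun (fun ω => δ ω ^ 2) g μ := by
    intro g hg
    exact indep_of_indep_of_le_left (indep_of_indep_of_le_right hind hg.comap_le) hδ_comap
  have hδsq_int : Integrable (fun ω => δ ω ^ 2) μ := hδ.integrable_sq
  -- δ • w' is in L²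
  have hmeas_nw : Measurable[G] fun ω => ‖w' ω‖ ^ 2 :=
    (hw'_sm.norm.measurable.pow_const 2)
  have hδw'2 : MemLp (fun ω => δ ω • w' ω) 2 μ := by
    have hint : Integrable (fun ω => δ ω ^ 2 * ‖w' ω‖ ^ 2) μ := by
      have h := (hindep_base hmeas_nw).integrable_mul hδsq_int (hw'.norm.integrable_sq)
      exact h
    refine (memLp_two_iff_integrable_sq_norm
      (hδae.smul ((hw'_sm.mono hG).aestronglyMeasurable))).mpr ?_
    refine hint.congr (Filter.Eventually.of_forall fun ω => ?_)
    show δ ω ^ 2 * ‖w' ω‖ ^ 2 = ‖δ ω • w' ω‖ ^ 2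
    rw [norm_smul, mul_pow, Real.norm_eq_abs, sq_abs]
  -- u is in L²
  have hnormX : (fun ω => ‖X ω‖) = fun ω => ‖δ ω‖ * ‖v ω‖ :=
    funext fun ω => norm_smul _ _
  set A : Ω → ℝ := μ[fun ω => ‖δ ω‖ * ‖v ω‖|G] with hA_def
  have hjensen : ∀ᵐ ω ∂μ, ‖u ω‖ ≤ A ω := by
    have h := condexp_norm_jensen hG hXint
    rwa [hnormX] at h
  set B : Ω → ℝ := μ[fun ω => ‖v ω‖ ^ 2|G] with hB_def
  have hB_int : Integrable B μ := integrable_condExp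
  have hB0 : 0 ≤ᵐ[μ] B :=
    condExp_nonneg (Filter.Eventually.of_forall fun ω => sq_nonneg _)
  have hA0 : 0 ≤ᵐ[μ] A :=
    condExp_nonneg (Filter.Eventually.of_forall fun ω =>
      mul_nonneg (norm_nonneg _) (norm_nonneg _))
  have hC : μ[fun ω => δ ω ^ 2|G] =ᵐ[μ] fun _ => τ := by
    letI : MeasurableSpace Ω := mΩ
    refine (ae_eq_condExp_of_forall_setIntegral_eq hG hδsq_int
      (fun s _ hσ => integrableOn_const hσ.ne)
      (fun s hs hμs => ?_) stronglyMeasurable_const.aestronglyMeasurable).symm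
    have hind_s : IndepFun (fun ω => δ ω ^ 2) (s.indicator fun _ => (1:ℝ)) μ :=
      hindep_base ((measurable_const : Measurable[G] fun _ => (1:ℝ)).indicator hs)
    have h1 : Integrable (s.indicator fun _ => (1:ℝ)) μ :=
      (integrable_const (1:ℝ)).indicator (hG s hs)
    have hmul := hind_s.integral_mul_eq_mul_integral hδsq_int.aestronglyMeasurable h1.aestronglyMeasurable
    simp only [Pi.mul_apply] at hmul
    calc (∫ _ in s, τ ∂μ) = (μ s).toReal • τ := setIntegral_const τ
    _ = τ * (μ s).toReal := by rw [smul_eq_mul, mul_comm]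
    _ = (∫ ω, δ ω ^ 2 ∂μ) * ∫ ω, s.indicator (fun _ => (1:ℝ)) ω ∂μ := by
        rw [hvar, integral_indicator_const (1:ℝ) (hG s hs)]
        simp [Measure.real]
    _ = ∫ ω, δ ω ^ 2 * s.indicator (fun _ => (1:ℝ)) ω ∂μ := hmul.symm
    _ = ∫ x in s, δ x ^ 2 ∂μ := by
        rw [← integral_indicator (hG s hs)]
        congr 1
        funext ω
        by_cases h : ω ∈ s <;> simp [Set.indicator_apply, h]
  have hq_bound : ∀ᵐ ω ∂μ, ∀ q : ℚ, 0 < q → A ω ≤ ((q:ℝ) * τ + B ω / q) / 2 := by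
    rw [ae_all_iff]
    intro q
    by_cases hq : 0 < q
    swap
    · filter_upwards with ω h; exact absurd h hq
    have hq0 : (0:ℝ) < (q:ℝ) := by exact_mod_cast hq
    have hpt : ∀ ω, ‖δ ω‖ * ‖v ω‖
        ≤ (((q:ℝ)/2) • fun ω => δ ω ^ 2) ω + ((1/(2*(q:ℝ))) • fun ω => ‖v ω‖ ^ 2) ω := by
      intro ω
      simp only [Pi.smul_apply, smul_eq_mul]
      have h2 : ‖δ ω‖ ^ 2 = δ ω ^ 2 := by rw [Real.norm_eq_abs, sq_abs]
      have hkey : ((q:ℝ)/2) * δ ω ^ 2 + (1/(2*(q:ℝ))) * ‖v ω‖ ^ 2 - ‖δ ω‖ * ‖v ω‖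
          = ((q:ℝ) * ‖δ ω‖ - ‖v ω‖) ^ 2 / (2*(q:ℝ)) := by
        have hqne : (q:ℝ) ≠ 0 := hq0.ne'
        rw [← h2, eq_div_iff (by positivity : (2*(q:ℝ)) ≠ 0)]
        field_simp
        ring
      have hnn : (0:ℝ) ≤ ((q:ℝ) * ‖δ ω‖ - ‖v ω‖) ^ 2 / (2*(q:ℝ)) :=
        div_nonneg (sq_nonneg _) (by positivity)
      linarith
    have hint1 : Integrable (((q:ℝ)/2) • fun ω => δ ω ^ 2) μ := hδsq_int.smul _
    have hint2 : Integrable ((1/(2*(q:ℝ))) • fun ω => ‖v ω‖ ^ 2) μ :=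
      (hv.norm.integrable_sq).smul _
    have hmono := condExp_mono (m := G) (aux_integrable_mul hδ.norm hv.norm)
      (hint1.add hint2) (Filter.Eventually.of_forall hpt)
    have e3 := condExp_add (m := G) (μ := μ) hint1 hint2
    have e1 := condExp_smul (m := G) (μ := μ) ((q:ℝ)/2) (fun ω => δ ω ^ 2)
    have e2 := condExp_smul (m := G) (μ := μ) (1/(2*(q:ℝ))) (fun ω => ‖v ω‖ ^ 2)
    filter_upwards [hmono, e3, e1, e2, hC] with ω h1 h2 h3 h4 h5
    intro _
    have hval : A ω ≤ ((q:ℝ)/2) * τ + (1/(2*(q:ℝ))) * B ω := by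
      calc A ω ≤ (μ[((q:ℝ)/2) • (fun ω => δ ω ^ 2)
            + (1/(2*(q:ℝ))) • fun ω => ‖v ω‖ ^ 2|G]) ω := h1
      _ = (μ[((q:ℝ)/2) • fun ω => δ ω ^ 2|G]) ω
            + (μ[(1/(2*(q:ℝ))) • fun ω => ‖v ω‖ ^ 2|G]) ω := h2
      _ = ((q:ℝ)/2) * (μ[fun ω => δ ω ^ 2|G]) ω + (1/(2*(q:ℝ))) * B ω := by
            rw [h3, h4]; simp [Pi.smul_apply, smul_eq_mul, hB_def]
      _ = ((q:ℝ)/2) * τ + (1/(2*(q:ℝ))) * B ω := by rw [h5]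
    calc A ω ≤ ((q:ℝ)/2) * τ + (1/(2*(q:ℝ))) * B ω := hval
    _ = ((q:ℝ) * τ + B ω / q) / 2 := by field_simp
  have hCS : ∀ᵐ ω ∂μ, A ω ^ 2 ≤ τ * B ω := by
    filter_upwards [hq_bound, hA0, hB0] with ω h1 h2 h3 using rat_am_gm h2 h3 hτ h1
  have hA_meas : AEStronglyMeasurable[mΩ] A μ := by
    rw [hA_def]; exact (stronglyMeasurable_condExp.mono hG).aestronglyMeasurable
  have hA2 : MemLp A 2 μ := by
    refine (memLp_two_iff_integrable_sq hA_meas).mpr ?_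
    have hmeas2 : AEStronglyMeasurable[mΩ] (fun ω => A ω ^ 2) μ := by
      simp only [sq]; exact hA_meas.mul hA_meas
    refine Integrable.mono' (hB_int.const_mul τ) hmeas2 ?_
    filter_upwards [hCS] with ω h1
    rw [Real.norm_eq_abs, abs_of_nonneg (sq_nonneg _)]
    exact h1
  have hu2 : MemLp u 2 μ := by
    refine hA2.of_le ((stronglyMeasurable_condExp.mono hG).aestronglyMeasurable) ?_
    filter_upwards [hjensen, hA0] with ω h1 h2
    rwa [Real.norm_eq_abs, abs_of_nonneg h2]
  -- truncations of w'
  set sn : ℕ → Set Ω := fun n => {ω | ‖w' ω‖ ≤ (n:ℝ)} with hsn_def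
  have hs_meas : ∀ n, MeasurableSet[G] (sn n) :=
    fun n => measurableSet_le hw'_sm.norm.measurable measurable_const
  set wtr : ℕ → Ω → H := fun n => (sn n).indicator w' with hwtr_def
  have hwtr_sm : ∀ n, StronglyMeasurable[G] (wtr n) :=
    fun n => hw'_sm.indicator (hs_meas n)
  have hwtr_bdd : ∀ n ω, ‖wtr n ω‖ ≤ (n:ℝ) := by
    intro n ω
    by_cases h : ω ∈ sn n
    · rw [hwtr_def]; simp only [Set.indicator_of_mem h]; exact h
    · rw [hwtr_def]; simp only [Set.indicator_of_notMem h, norm_zero]; positivity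
  have hwtr_le : ∀ n ω, ‖wtr n ω‖ ≤ ‖w' ω‖ := by
    intro n ω
    by_cases h : ω ∈ sn n
    · rw [hwtr_def]; simp [Set.indicator_of_mem h]
    · rw [hwtr_def]; simp [Set.indicator_of_notMem h]
  have hwtr_tend : ∀ ω, Filter.Tendsto (fun n => wtr n ω) Filter.atTop (𝓝 (w' ω)) := by
    intro ω
    refine tendsto_atTop_of_eventually_const (i₀ := ⌈‖w' ω‖⌉₊) fun n hn => ?_
    have hmem : ω ∈ sn n := by
      simp only [hsn_def, Set.mem_setOf_eq]
      exact (Nat.le_ceil _).trans (by exact_mod_cast hn)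
    rw [hwtr_def]; simp [Set.indicator_of_mem hmem]
  -- domination functions
  have hXw_dom : Integrable (fun ω => ‖v ω‖ * ‖δ ω • w' ω‖) μ :=
    aux_integrable_mul hv.norm hδw'2.norm
  have huw_dom : Integrable (fun ω => ‖u ω‖ * ‖w' ω‖) μ :=
    aux_integrable_mul hu2.norm hw'.norm
  have hXbound : ∀ (ω : Ω) (z : H), ‖z‖ ≤ ‖w' ω‖ → ‖⟪X ω, z⟫‖ ≤ ‖v ω‖ * ‖δ ω • w' ω‖ := by
    intro ω z hz
    calc ‖⟪X ω, z⟫‖ ≤ ‖X ω‖ * ‖z‖ := norm_inner_le_norm _ _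
    _ ≤ ‖X ω‖ * ‖w' ω‖ := mul_le_mul_of_nonneg_left hz (norm_nonneg _)
    _ = ‖v ω‖ * ‖δ ω • w' ω‖ := by
        rw [hX_def]; simp only []
        rw [norm_smul, norm_smul]; ring
  -- the key pairing identity
  have hpair : ∫ ω, ⟪X ω, w' ω⟫ ∂μ = ∫ ω, ⟪u ω, w' ω⟫ ∂μ := by
    have lim1 : Filter.Tendsto (fun n => ∫ ω, ⟪X ω, wtr n ω⟫ ∂μ) Filter.atTop
        (𝓝 (∫ ω, ⟪X ω, w' ω⟫ ∂μ)) := by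
      refine tendsto_integral_of_dominated_convergence (fun ω => ‖v ω‖ * ‖δ ω • w' ω‖)
        (fun n => hXint.aestronglyMeasurable.inner
          (((hwtr_sm n).mono hG).aestronglyMeasurable))
        hXw_dom
        (fun n => Filter.Eventually.of_forall fun ω => hXbound ω _ (hwtr_le n ω))
        (Filter.Eventually.of_forall fun ω =>
          Filter.Tendsto.inner tendsto_const_nhds (hwtr_tend ω))
    have lim2 : Filter.Tendsto (fun n => ∫ ω, ⟪u ω, wtr n ω⟫ ∂μ) Filter.atTop
        (𝓝 (∫ ω, ⟪u ω, w' ω⟫ ∂μ)) := by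
      refine tendsto_integral_of_dominated_convergence (fun ω => ‖u ω‖ * ‖w' ω‖)
        (fun n => integrable_condExp.aestronglyMeasurable.inner
          (((hwtr_sm n).mono hG).aestronglyMeasurable))
        huw_dom
        (fun n => Filter.Eventually.of_forall fun ω => ?_)
        (Filter.Eventually.of_forall fun ω =>
          Filter.Tendsto.inner tendsto_const_nhds (hwtr_tend ω))
      calc ‖⟪u ω, wtr n ω⟫‖ ≤ ‖u ω‖ * ‖wtr n ω‖ := norm_inner_le_norm _ _
      _ ≤ ‖u ω‖ * ‖w' ω‖ := mul_le_mul_of_nonneg_left (hwtr_le n ω) (norm_nonneg _)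
    exact tendsto_nhds_unique
      (Filter.Tendsto.congr
        (fun n => pairing_bdd hG hXint (hwtr_sm n) (hwtr_bdd n)) lim1) lim2
  -- rewrite the integrand
  have hintegrand : (fun ω => ⟪v ω - δ ω • (τ⁻¹ • u) ω, δ ω • w ω⟫)
      =ᵐ[μ] fun ω => ⟪X ω, w' ω⟫ - τ⁻¹ * (δ ω ^ 2 * ⟪u ω, w' ω⟫) := by
    filter_upwards [hww'] with ω hω
    rw [hω, hX_def]
    simp only [Pi.smul_apply, inner_sub_left, real_inner_smul_left, real_inner_smul_right]
    ring
  rw [integral_congr_ae hintegrand]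
  -- integrability of both pieces
  have hint1 : Integrable (fun ω => ⟪X ω, w' ω⟫) μ := by
    refine Integrable.mono' hXw_dom
      (hXint.aestronglyMeasurable.inner ((hw'_sm.mono hG).aestronglyMeasurable))
      (Filter.Eventually.of_forall fun ω => hXbound ω _ le_rfl)
  have hg_meas : Measurable[G] (fun ω => ⟪u ω, w' ω⟫) :=
    (stronglyMeasurable_condExp.inner hw'_sm).measurable
  have hg_int : Integrable (fun ω => ⟪u ω, w' ω⟫) μ := aux_integrable_inner hu2 hw'
  have hind2 : IndepFun (fun ω => δ ω ^ 2) (fun ω => ⟪u ω, w' ω⟫) μ := hindep_base hg_meas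
  have hint2 : Integrable (fun ω => δ ω ^ 2 * ⟪u ω, w' ω⟫) μ := by
    have h := hind2.integrable_mul hδsq_int hg_int
    exact h
  rw [integral_sub hint1 (hint2.const_mul τ⁻¹), integral_const_mul]
  have hfact : ∫ ω, δ ω ^ 2 * ⟪u ω, w' ω⟫ ∂μ
      = (∫ ω, δ ω ^ 2 ∂μ) * ∫ ω, ⟪u ω, w' ω⟫ ∂μ :=
    hind2.integral_fun_mul_eq_mul_integral hδsq_int.aestronglyMeasurable hg_int.aestronglyMeasurable
  rw [hpair, hfact, hvar, ← mul_assoc, inv_mul_cancel₀ hτ0, one_mul, sub_self]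
end

section
/- There exists an absolute constant c > 0 with the following property: for every T > 0, every positive integer J, with τ := T/J and t_k := kτ, and every 0 ≤ j < J, one has ∑_{k=j}^{J−1} ∫_{t_k}^{t_{k+1}} ( sup_{λ ≥ 0} | e^{−(t−t_j)λ} − (1+τλ)^{−(k−j+1)} | )² dt ≤ c·τ. (This is the scalar-spectral form of the estimate ∑_{k=j}^{J−1} ∫_{t_k}^{t_{k+1}} ‖e^{(t−t_j)A} − (I−τA)^{−(k−j+1)}‖_{𝓛(H)}² dt ≤ cτ for a self-adjoint operator A whose spectrum lies in (−∞, 0].) -/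
open scoped BigOperators


private lemma pow_sub_pow_le_aux (a b : ℝ) (hb : 0 ≤ b) (hba : b ≤ a) :
    ∀ n : ℕ, a ^ (n+1) - b ^ (n+1) ≤ (n+1 : ℝ) * a ^ n * (a - b) := by
  intro n
  induction n with
  | zero => simp
  | succ n ih =>
    have ha : 0 ≤ a := hb.trans hba
    have hpow : b ^ (n+1) ≤ a ^ (n+1) := pow_le_pow_left₀ hb hba _
    have han : (0:ℝ) ≤ a ^ n := pow_nonneg ha n
    have : a ^ (n+2) - b ^ (n+2) = a * (a ^ (n+1) - b ^ (n+1)) + b ^ (n+1) * (a - b) := by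
      ring
    rw [this]
    have h1 : a * (a ^ (n+1) - b ^ (n+1)) ≤ a * ((n+1 : ℝ) * a ^ n * (a - b)) :=
      mul_le_mul_of_nonneg_left ih ha
    have h2 : b ^ (n+1) * (a - b) ≤ a ^ (n+1) * (a - b) :=
      mul_le_mul_of_nonneg_right hpow (by linarith)
    have : a * ((n+1 : ℝ) * a ^ n * (a - b)) = (n+1 : ℝ) * a ^ (n+1) * (a - b) := by ring
    push_cast
    nlinarith [pow_nonneg ha (n+1)]

private lemma binom_lower (x : ℝ) (hx : 0 ≤ x) :
    ∀ m : ℕ, 1 + (m:ℝ) * x + (m:ℝ) * ((m:ℝ) - 1) / 2 * x ^ 2 ≤ (1 + x) ^ m := by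
  intro m
  induction m with
  | zero => norm_num
  | succ m ih =>
    have h1x : (0:ℝ) ≤ 1 + x := by linarith
    have : (1 + x) ^ (m+1) = (1 + x) ^ m * (1 + x) := by ring
    rw [this]
    have h2 : (1 + (m:ℝ) * x + (m:ℝ) * ((m:ℝ) - 1) / 2 * x ^ 2) * (1 + x) ≤
        (1 + x) ^ m * (1 + x) := by
      apply mul_le_mul_of_nonneg_right ih h1x
    have h3 : (0:ℝ) ≤ (m:ℝ) * ((m:ℝ) - 1) := by
      rcases m with _ | m
      · norm_num
      · push_cast
        nlinarith [Nat.cast_nonneg (α := ℝ) m]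
    have h4 : (0:ℝ) ≤ (m:ℝ) * ((m:ℝ) - 1) / 2 * x ^ 3 := by positivity
    push_cast
    nlinarith [h4]

set_option maxHeartbeats 1000000 in
private lemma key_est (τ lam : ℝ) (hτ : 0 < τ) (hlam : 0 ≤ lam) (m : ℕ) (hm : 1 ≤ m)
    (s : ℝ) (hs1 : ((m:ℝ) - 1) * τ ≤ s) (hs2 : s ≤ (m:ℝ) * τ) :
    |Real.exp (-s * lam) - ((1 + τ * lam) ^ m)⁻¹| ≤ 4 / m := by
  set x : ℝ := τ * lam with hxdef
  have hx : 0 ≤ x := mul_nonneg hτ.le hlam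
  have h1x : (0:ℝ) < 1 + x := by linarith
  have hm1' : (1:ℝ) ≤ (m:ℝ) := by exact_mod_cast hm
  have hs0 : 0 ≤ s := le_trans (by nlinarith) hs1
  have hA1 : Real.exp (-s * lam) ≤ Real.exp (-(((m:ℝ) - 1) * x)) := by
    apply Real.exp_le_exp.mpr
    have := mul_le_mul_of_nonneg_right hs1 hlam
    nlinarith
  have hA2 : Real.exp (-((m:ℝ) * x)) ≤ Real.exp (-s * lam) := by
    apply Real.exp_le_exp.mpr
    have := mul_le_mul_of_nonneg_right hs2 hlam
    nlinarith
  have hE : Real.exp (-x) ≤ (1 + x)⁻¹ := by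
    rw [Real.exp_neg]
    exact inv_anti₀ h1x (by linarith [Real.add_one_le_exp x])
  have hEpos : (0:ℝ) < Real.exp (-x) := Real.exp_pos _
  have hB : Real.exp (-((m:ℝ) * x)) = Real.exp (-x) ^ m := by
    rw [← Real.exp_nat_mul]; ring_nf
  have hBle : Real.exp (-((m:ℝ) * x)) ≤ ((1 + x) ^ m)⁻¹ := by
    rw [hB, ← inv_pow]
    exact pow_le_pow_left₀ hEpos.le hE m
  have hBpos : (0:ℝ) < ((1 + x) ^ m)⁻¹ := by positivity
  have hB1 : ((1 + x) ^ m)⁻¹ ≤ 1 := by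
    rw [inv_le_one_iff₀]
    right
    exact one_le_pow₀ (by linarith)
  have hAle1 : Real.exp (-s * lam) ≤ 1 := by
    rw [← Real.exp_zero]
    apply Real.exp_le_exp.mpr
    nlinarith
  have hApos : (0:ℝ) < Real.exp (-s * lam) := Real.exp_pos _
  rcases eq_or_lt_of_le hm with hm1 | hm2
  · -- m = 1 : trivial bound by 1 ≤ 4
    have : ((m:ℝ)) = 1 := by exact_mod_cast hm1.symm
    rw [this]
    rw [abs_le]
    constructor <;> nlinarith
  · -- m ≥ 2
    have hm2' : (2:ℝ) ≤ (m:ℝ) := by exact_mod_cast hm2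
    have hmpos : (0:ℝ) < (m:ℝ) := by linarith
    rw [abs_le]
    constructor
    · -- lower bound: B - A ≤ 4/m
      -- B - A ≤ B - exp(-mx) = (1+x)^{-m} - exp(-x)^m ≤ m x² (1+x)^{-m} ≤ 4/m
      have hab : Real.exp (-x) ≤ (1+x)⁻¹ := hE
      have hdiff : (1+x)⁻¹ - Real.exp (-x) ≤ x ^ 2 * (1+x)⁻¹ := by
        have h1 : 1 - x ≤ Real.exp (-x) := by linarith [Real.add_one_le_exp (-x)]
        rw [← sub_nonneg]
        have heq : x ^ 2 * (1+x)⁻¹ - ((1+x)⁻¹ - Real.exp (-x)) =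
            (x ^ 2 - 1) * (1+x)⁻¹ + Real.exp (-x) := by ring
        rw [heq]
        have hzero : (x ^ 2 - 1) * (1+x)⁻¹ + (1 - x) = 0 := by
          field_simp
          ring
        linarith
      have hpowsub : (1+x)⁻¹ ^ m - Real.exp (-x) ^ m ≤
          (m:ℝ) * (1+x)⁻¹ ^ (m-1) * ((1+x)⁻¹ - Real.exp (-x)) := by
        obtain ⟨n, rfl⟩ : ∃ n, m = n + 1 := ⟨m - 1, (Nat.succ_pred_eq_of_pos (by omega)).symm⟩
        simpa using pow_sub_pow_le_aux (1+x)⁻¹ (Real.exp (-x)) hEpos.le hE n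
      have hstep : ((1 + x) ^ m)⁻¹ - Real.exp (-((m:ℝ) * x)) ≤ (m:ℝ) * x ^ 2 * ((1+x)^m)⁻¹ := by
        rw [hB, ← inv_pow]
        calc (1+x)⁻¹ ^ m - Real.exp (-x) ^ m
            ≤ (m:ℝ) * (1+x)⁻¹ ^ (m-1) * ((1+x)⁻¹ - Real.exp (-x)) := hpowsub
          _ ≤ (m:ℝ) * (1+x)⁻¹ ^ (m-1) * (x ^ 2 * (1+x)⁻¹) := by
              apply mul_le_mul_of_nonneg_left hdiff
              positivity
          _ = (m:ℝ) * x ^ 2 * ((1+x)⁻¹ ^ m) := by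
              obtain ⟨n, rfl⟩ : ∃ n, m = n + 1 := ⟨m - 1, (Nat.succ_pred_eq_of_pos (by omega)).symm⟩
              simp only [Nat.add_sub_cancel]
              ring
      have hbin : (m:ℝ) * ((m:ℝ) - 1) / 2 * x ^ 2 ≤ (1+x) ^ m := by
        have := binom_lower x hx m
        nlinarith [mul_nonneg (Nat.cast_nonneg (α := ℝ) m) hx]
      have hfinal : (m:ℝ) * x ^ 2 * ((1+x)^m)⁻¹ ≤ 4 / m := by
        rw [inv_eq_one_div, mul_one_div, div_le_div_iff₀ (by positivity) hmpos]
        -- m x² * m ≤ 4 (1+x)^m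
        have hmx : (m:ℝ) * x ^ 2 * (m:ℝ) ≤ 4 * ((m:ℝ) * ((m:ℝ) - 1) / 2 * x ^ 2) := by
          nlinarith [mul_nonneg (mul_nonneg hmpos.le (by linarith : (0:ℝ) ≤ (m:ℝ) - 2)) (sq_nonneg x)]
        linarith
      linarith
    · -- upper bound : A - B ≤ 2/m ≤ 4/m
      have h1 : 1 - Real.exp (-x) ≤ x := by linarith [Real.add_one_le_exp (-x)]
      have hy : (0:ℝ) ≤ ((m:ℝ) - 1) * x := by nlinarith
      have h2 : ((m:ℝ) - 1) * x * Real.exp (-(((m:ℝ) - 1) * x)) ≤ 1 := by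
        have hyy : ((m:ℝ) - 1) * x ≤ Real.exp (((m:ℝ) - 1) * x) := by
          linarith [Real.add_one_le_exp (((m:ℝ) - 1) * x)]
        have := mul_le_mul_of_nonneg_right hyy (Real.exp_pos (-(((m:ℝ) - 1) * x))).le
        rwa [← Real.exp_add, add_neg_cancel, Real.exp_zero] at this
      have hEx1 : Real.exp (-(((m:ℝ) - 1) * x)) ≤ 1 :=
        le_trans (Real.exp_le_exp.mpr (by linarith)) (le_of_eq Real.exp_zero)
      have hsplit : Real.exp (-(((m:ℝ)-1) * x)) - Real.exp (-((m:ℝ) * x)) =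
          Real.exp (-(((m:ℝ)-1) * x)) * (1 - Real.exp (-x)) := by
        rw [mul_sub, mul_one, ← Real.exp_add]
        have harg : -(((m:ℝ)-1) * x) + -x = -((m:ℝ) * x) := by ring
        rw [harg]
      have hxe : x * Real.exp (-(((m:ℝ) - 1) * x)) ≤ 2 / m := by
        rw [le_div_iff₀ hmpos]
        nlinarith [Real.exp_pos (-(((m:ℝ) - 1) * x)), mul_nonneg hx (Real.exp_pos (-(((m:ℝ) - 1) * x))).le]
      have : Real.exp (-s * lam) - ((1 + x) ^ m)⁻¹ ≤ 2 / m := by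
        have e1 : Real.exp (-s * lam) - ((1 + x) ^ m)⁻¹ ≤
            Real.exp (-(((m:ℝ)-1) * x)) - Real.exp (-((m:ℝ) * x)) := by linarith
        rw [hsplit] at e1
        have e2 : Real.exp (-(((m:ℝ)-1) * x)) * (1 - Real.exp (-x)) ≤
            Real.exp (-(((m:ℝ)-1) * x)) * x :=
          mul_le_mul_of_nonneg_left h1 (Real.exp_pos _).le
        calc Real.exp (-s * lam) - ((1 + x) ^ m)⁻¹
            ≤ Real.exp (-(((m:ℝ)-1) * x)) * x := le_trans e1 e2
          _ = x * Real.exp (-(((m:ℝ)-1) * x)) := by ring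
          _ ≤ 2 / m := hxe
      have h24 : (2:ℝ) / m ≤ 4 / m := by
        gcongr
        norm_num
      linarith

private lemma sum_inv_sq : ∀ n : ℕ, ∑ i ∈ Finset.range n, (4 / ((i:ℝ) + 1)) ^ 2 ≤ 32 - 32 / ((n:ℝ) + 1) := by
  intro n
  induction n with
  | zero => norm_num
  | succ n ih =>
    rw [Finset.sum_range_succ]
    have h1 : (0:ℝ) < (n:ℝ) + 1 := by positivity
    have h2 : (0:ℝ) < (n:ℝ) + 2 := by positivity
    have step : (4 / ((n:ℝ) + 1)) ^ 2 ≤ 32 / ((n:ℝ) + 1) - 32 / ((n:ℝ) + 2) := by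
      rw [div_pow, div_sub_div _ _ (ne_of_gt h1) (ne_of_gt h2),
        div_le_div_iff₀ (by positivity) (by positivity)]
      ring_nf
      nlinarith [Nat.cast_nonneg (α := ℝ) n]
    push_cast
    have hcast : ((n:ℝ) + 1 + 1) = (n:ℝ) + 2 := by ring
    rw [hcast]
    linarith

/-- There is an absolute constant `c > 0` such that for every `T > 0`, every
positive integer `J` (with `τ := T/J`, `t_k := kτ`) and every `0 ≤ j < J`,
`∑_{k=j}^{J−1} ∫_{t_k}^{t_{k+1}} (sup_{λ≥0} |e^{−(t−t_j)λ} − (1+τλ)^{−(k−j+1)}|)² dt ≤ c·τ`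
(the scalar-spectral form of `∑_k ∫ ‖e^{(t−t_j)A} − (I−τA)^{−(k−j+1)}‖²_{𝓛(H)} dt ≤ cτ`). -/
theorem stmt9 :
    ∃ c : ℝ, 0 < c ∧
      ∀ (T : ℝ), 0 < T → ∀ (J : ℕ), 0 < J → ∀ j : ℕ, j < J →
        ∑ k ∈ Finset.Ico j J,
          (∫ t in ((k : ℝ) * (T / J))..(((k : ℝ) + 1) * (T / J)),
            (⨆ l : {l : ℝ // 0 ≤ l},
              |Real.exp (-(t - (j : ℝ) * (T / J)) * l.1) -
                ((1 + (T / J) * l.1) ^ (k - j + 1))⁻¹|) ^ 2) ≤ c * (T / J) := by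
  refine ⟨32, by norm_num, ?_⟩
  intro T hT J hJ j hjJ
  have hJ' : (0:ℝ) < (J:ℝ) := by exact_mod_cast hJ
  set τ : ℝ := T / J with hτdef
  have hτ : 0 < τ := div_pos hT hJ'
  have hterm : ∀ k ∈ Finset.Ico j J,
      (∫ t in ((k : ℝ) * τ)..(((k : ℝ) + 1) * τ),
        (⨆ l : {l : ℝ // 0 ≤ l},
          |Real.exp (-(t - (j : ℝ) * τ) * l.1) -
            ((1 + τ * l.1) ^ (k - j + 1))⁻¹|) ^ 2)
      ≤ (4 / (((k - j + 1 : ℕ)) : ℝ)) ^ 2 * τ := by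
    intro k hk
    obtain ⟨hjk, hkJ⟩ := Finset.mem_Ico.mp hk
    set m : ℕ := k - j + 1 with hmdef
    have hm : 1 ≤ m := by omega
    have hmcast : ((m : ℕ) : ℝ) = (k:ℝ) - (j:ℝ) + 1 := by
      rw [hmdef, Nat.cast_add, Nat.cast_sub hjk, Nat.cast_one]
    have hbound : ∀ t ∈ Set.uIoc ((k:ℝ)*τ) (((k:ℝ)+1)*τ),
        ‖(⨆ l : {l : ℝ // 0 ≤ l},
          |Real.exp (-(t - (j : ℝ) * τ) * l.1) -
            ((1 + τ * l.1) ^ m)⁻¹|) ^ 2‖ ≤ (4 / (m:ℝ)) ^ 2 := by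
      intro t ht
      rw [Set.uIoc_of_le (by nlinarith : (k:ℝ)*τ ≤ ((k:ℝ)+1)*τ)] at ht
      obtain ⟨ht1, ht2⟩ := ht
      have hptw : ∀ l : {l : ℝ // 0 ≤ l},
          |Real.exp (-(t - (j:ℝ)*τ) * l.1) - ((1 + τ * l.1) ^ m)⁻¹| ≤ 4 / (m:ℝ) := by
        intro l
        apply key_est τ l.1 hτ l.2 m hm (t - (j:ℝ)*τ)
        · rw [hmcast]
          nlinarith
        · rw [hmcast]
          nlinarith
      have hbdd : BddAbove (Set.range fun l : {l : ℝ // 0 ≤ l} =>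
          |Real.exp (-(t - (j:ℝ)*τ) * l.1) - ((1 + τ * l.1) ^ m)⁻¹|) := by
        refine ⟨4 / (m:ℝ), ?_⟩
        rintro _ ⟨l, rfl⟩
        exact hptw l
      have h0 : (0:ℝ) ≤ ⨆ l : {l : ℝ // 0 ≤ l},
          |Real.exp (-(t - (j:ℝ)*τ) * l.1) - ((1 + τ * l.1) ^ m)⁻¹| :=
        le_trans (abs_nonneg _) (le_ciSup hbdd ⟨0, le_rfl⟩)
      have hsup : (⨆ l : {l : ℝ // 0 ≤ l},
          |Real.exp (-(t - (j:ℝ)*τ) * l.1) - ((1 + τ * l.1) ^ m)⁻¹|) ≤ 4 / (m:ℝ) :=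
        ciSup_le hptw
      rw [Real.norm_eq_abs, abs_of_nonneg (by positivity)]
      exact pow_le_pow_left₀ h0 hsup 2
    have hnorm := intervalIntegral.norm_integral_le_of_norm_le_const hbound
    have habs : |(((k:ℝ)+1)*τ) - ((k:ℝ)*τ)| = τ := by
      rw [show (((k:ℝ)+1)*τ) - ((k:ℝ)*τ) = τ by ring, abs_of_pos hτ]
    rw [habs, Real.norm_eq_abs] at hnorm
    exact le_trans (le_abs_self _) hnorm
  calc ∑ k ∈ Finset.Ico j J,
        (∫ t in ((k : ℝ) * τ)..(((k : ℝ) + 1) * τ),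
          (⨆ l : {l : ℝ // 0 ≤ l},
            |Real.exp (-(t - (j : ℝ) * τ) * l.1) -
              ((1 + τ * l.1) ^ (k - j + 1))⁻¹|) ^ 2)
      ≤ ∑ k ∈ Finset.Ico j J, (4 / (((k - j + 1 : ℕ)) : ℝ)) ^ 2 * τ :=
        Finset.sum_le_sum hterm
    _ = (∑ k ∈ Finset.Ico j J, (4 / (((k - j + 1 : ℕ)) : ℝ)) ^ 2) * τ :=
        (Finset.sum_mul _ _ _).symm
    _ ≤ 32 * τ := by
        apply mul_le_mul_of_nonneg_right _ hτ.le
        rw [Finset.sum_Ico_eq_sum_range]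
        have hcongr : ∀ i ∈ Finset.range (J - j),
            (4 / (((j + i - j + 1 : ℕ)) : ℝ)) ^ 2 = (4 / ((i:ℝ) + 1)) ^ 2 := by
          intro i _
          congr 2
          push_cast [Nat.add_sub_cancel_left]
          ring
        rw [Finset.sum_congr rfl hcongr]
        have := sum_inv_sq (J - j)
        have hpos : (0:ℝ) ≤ 32 / (((J - j : ℕ) : ℝ) + 1) := by positivity
        linarith
end

section
/- There exists an absolute constant c > 0 with the following property: for every T > 0, every positive integer J, with τ := T/J and t_k := kτ, and every 0 ≤ j < J, one has ∑_{k=j}^{J−1} ∫_{t_k}^{t_{k+1}} ( sup_{λ ≥ 0} | e^{−(t−t_j)λ} − e^{−(t_{k+1}−t_j)λ} | )² dt ≤ c·τ. (This is the scalar-spectral form of the semigroup-difference estimate ∑_{k=j}^{J−1} ∫_{t_k}^{t_{k+1}} ‖e^{(t−t_j)A} − e^{(t_{k+1}−t_j)A}‖_{𝓛(H)}² dt ≤ cτ for a self-adjoint operator A whose spectrum lies in (−∞, 0].) -/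
open scoped BigOperators

set_option maxHeartbeats 1000000

private lemma aux_sq_sum (N : ℕ) : ∑ i ∈ Finset.range N, (1:ℝ)/((i:ℝ)+1)^2 ≤ 2 := by
  have h : ∀ N : ℕ, ∑ i ∈ Finset.range N, (1:ℝ)/((i:ℝ)+1)^2 ≤ 2 - 2/((N:ℝ)+1) := by
    intro N
    induction N with
    | zero => simp
    | succ n ih =>
      rw [Finset.sum_range_succ]
      push_cast
      have hn1 : (0:ℝ) < (n:ℝ)+1 := by positivity
      have hn2 : (0:ℝ) < (n:ℝ)+1+1 := by positivity
      have key : 1/((n:ℝ)+1)^2 ≤ 2/((n:ℝ)+1) - 2/((n:ℝ)+1+1) := by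
        rw [div_sub_div _ _ (ne_of_gt hn1) (ne_of_gt hn2), div_le_div_iff₀ (by positivity) (by positivity)]
        nlinarith
      linarith
  have hN : (0:ℝ) ≤ 2/((N:ℝ)+1) := by positivity
  linarith [h N]

theorem stmt10 :
    ∃ c : ℝ, 0 < c ∧
      ∀ (T : ℝ), 0 < T → ∀ (J : ℕ), 0 < J → ∀ j : ℕ, j < J →
        ∑ k ∈ Finset.Ico j J,
          (∫ t in ((k : ℝ) * (T / J))..(((k : ℝ) + 1) * (T / J)),
            (⨆ l : {l : ℝ // 0 ≤ l},
              |Real.exp (-(t - (j : ℝ) * (T / J)) * l.1) -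
                Real.exp (-((((k : ℝ) + 1) * (T / J)) - (j : ℝ) * (T / J)) * l.1)|) ^ 2) ≤
          c * (T / J) := by
  refine ⟨2, two_pos, ?_⟩
  intro T hT J hJ j hjJ
  haveI : Nonempty {l : ℝ // 0 ≤ l} := ⟨⟨0, le_refl 0⟩⟩
  set τ : ℝ := T / J with hτdef
  have hτ : 0 < τ := div_pos hT (by exact_mod_cast hJ)
  set C : ℕ → ℝ := fun k => (if k = j then (1:ℝ) else 1/(Real.exp 1 * ((k:ℝ)-(j:ℝ))))^2 with hC
  have he1 : (0:ℝ) < Real.exp 1 := Real.exp_pos 1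
  have he2 : (2:ℝ) ≤ Real.exp 1 := by
    have := Real.add_one_le_exp (1:ℝ)
    linarith
  -- per-term bound
  have hterm : ∀ k ∈ Finset.Ico j J,
      (∫ t in ((k : ℝ) * τ)..(((k : ℝ) + 1) * τ),
        (⨆ l : {l : ℝ // 0 ≤ l},
          |Real.exp (-(t - (j : ℝ) * τ) * l.1) -
            Real.exp (-((((k : ℝ) + 1) * τ) - (j : ℝ) * τ) * l.1)|) ^ 2) ≤ C k * τ := by
    intro k hk
    obtain ⟨hjk, hkJ⟩ := Finset.mem_Ico.mp hk
    have hjk' : (j:ℝ) ≤ (k:ℝ) := by exact_mod_cast hjk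
    set a : ℝ := (k:ℝ) * τ with ha
    set b : ℝ := ((k:ℝ)+1) * τ with hb
    have hab : a ≤ b := by nlinarith
    set B : ℝ := if k = j then (1:ℝ) else 1/(Real.exp 1 * ((k:ℝ)-(j:ℝ))) with hBdef
    have hB0 : 0 ≤ B := by
      rw [hBdef]
      split_ifs with h
      · norm_num
      · have hlt : (j:ℝ) < (k:ℝ) := by
          have : j < k := lt_of_le_of_ne hjk (fun he => h he.symm)
          exact_mod_cast this
        exact le_of_lt (div_pos one_pos (mul_pos he1 (by linarith)))
    have hbound : ∀ t ∈ Set.uIoc a b,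
        ‖(⨆ l : {l : ℝ // 0 ≤ l},
          |Real.exp (-(t - (j : ℝ) * τ) * l.1) -
            Real.exp (-(b - (j : ℝ) * τ) * l.1)|) ^ 2‖ ≤ B^2 := by
      intro t ht
      rw [Set.uIoc_of_le hab] at ht
      obtain ⟨hta, htb⟩ := ht
      set s : ℝ := t - (j:ℝ) * τ with hs
      set s' : ℝ := b - (j:ℝ) * τ with hs'
      have hs0 : 0 ≤ s := by
        have : (j:ℝ) * τ ≤ a := by
          rw [ha]; exact mul_le_mul_of_nonneg_right hjk' (le_of_lt hτ)
        simp only [hs]; linarith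
      have hss' : s ≤ s' := by simp only [hs, hs']; linarith
      have hsup_le : (⨆ l : {l : ℝ // 0 ≤ l},
          |Real.exp (-s * l.1) - Real.exp (-s' * l.1)|) ≤ B := by
        apply ciSup_le
        rintro ⟨lam, hlam⟩
        simp only
        have hmono : Real.exp (-s' * lam) ≤ Real.exp (-s * lam) := by
          apply Real.exp_le_exp.mpr
          nlinarith
        rw [abs_of_nonneg (by linarith)]
        rw [hBdef]
        split_ifs with hkj
        · have h1 : Real.exp (-s * lam) ≤ 1 := Real.exp_le_one_iff.mpr (by nlinarith)
          have h2 : 0 < Real.exp (-s' * lam) := Real.exp_pos _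
          linarith
        · -- k > j case
          have hjklt : (j:ℝ) < (k:ℝ) := by
            have : j < k := lt_of_le_of_ne hjk (fun he => hkj he.symm)
            exact_mod_cast this
          set m : ℝ := (k:ℝ) - (j:ℝ) with hm
          have hm1 : 1 ≤ m := by
            have : j + 1 ≤ k := lt_of_le_of_ne hjk (fun he => hkj he.symm)
            have : ((j:ℝ) + 1) ≤ (k:ℝ) := by exact_mod_cast this
            simp only [hm]; linarith
          have hm0 : 0 < m := by linarith
          have hsm : m * τ ≤ s := by
            have : (k:ℝ) * τ - (j:ℝ)*τ = m * τ := by ring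
            simp only [hs]; nlinarith
          -- step 1: diff ≤ (s'-s) * lam * exp(-s*lam)
          have hexpmul : Real.exp (-s' * lam) =
              Real.exp (-s * lam) * Real.exp (-(s'-s) * lam) := by
            rw [← Real.exp_add]; ring_nf
          have h1x : 1 - (s'-s)*lam ≤ Real.exp (-(s'-s)*lam) := by
            have := Real.add_one_le_exp (-(s'-s)*lam)
            linarith
          have step1 : Real.exp (-s * lam) - Real.exp (-s' * lam) ≤
              (s'-s) * lam * Real.exp (-s * lam) := by
            rw [hexpmul]
            nlinarith [Real.exp_pos (-s * lam)]
          -- step 2: exp(-s*lam) ≤ exp(-(m*τ)*lam)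
          have step2 : Real.exp (-s * lam) ≤ Real.exp (-(m*τ) * lam) := by
            apply Real.exp_le_exp.mpr
            nlinarith
          -- step 3: x * exp(-x) ≤ exp(-1) for x = m*τ*lam
          have step3 : (m*τ*lam) * Real.exp (-(m*τ*lam)) ≤ Real.exp (-1) := by
            have h := Real.add_one_le_exp (m*τ*lam - 1)
            have : m*τ*lam ≤ Real.exp (m*τ*lam - 1) := by linarith
            have hmul := mul_le_mul_of_nonneg_right this (le_of_lt (Real.exp_pos (-(m*τ*lam))))
            calc (m*τ*lam) * Real.exp (-(m*τ*lam))
                ≤ Real.exp (m*τ*lam - 1) * Real.exp (-(m*τ*lam)) := hmul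
              _ = Real.exp (-1) := by rw [← Real.exp_add]; ring_nf
          have hss'τ : s' - s ≤ τ := by
            simp only [hs, hs']; linarith
          have hlamexp0 : 0 ≤ lam * Real.exp (-(m*τ)*lam) := by positivity
          have chain : Real.exp (-s * lam) - Real.exp (-s' * lam) ≤
              τ * (lam * Real.exp (-(m*τ)*lam)) := by
            have h2 : (s'-s) * lam * Real.exp (-s * lam) ≤
                (s'-s) * lam * Real.exp (-(m*τ)*lam) := by
              apply mul_le_mul_of_nonneg_left step2 (mul_nonneg (by linarith) hlam)
            have h3 : (s'-s) * lam * Real.exp (-(m*τ)*lam) ≤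
                τ * (lam * Real.exp (-(m*τ)*lam)) := by
              have := mul_le_mul_of_nonneg_right hss'τ hlamexp0
              nlinarith
            linarith
          have final : τ * (lam * Real.exp (-(m*τ)*lam)) ≤ 1/(Real.exp 1 * m) := by
            have hexpneg : Real.exp (-1) = 1 / Real.exp 1 := by
              rw [Real.exp_neg]; exact inv_eq_one_div _
            have : (m*τ*lam) * Real.exp (-(m*τ*lam)) ≤ 1 / Real.exp 1 := by
              rw [← hexpneg]; exact step3
            have hrw : τ * (lam * Real.exp (-(m*τ)*lam)) =
                ((m*τ*lam) * Real.exp (-(m*τ*lam))) / m := by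
              field_simp
            rw [hrw]
            rw [div_le_div_iff₀ hm0 (by positivity)]
            calc (m*τ*lam) * Real.exp (-(m*τ*lam)) * (Real.exp 1 * m)
                = ((m*τ*lam) * Real.exp (-(m*τ*lam)) * Real.exp 1) * m := by ring
              _ ≤ (1/Real.exp 1 * Real.exp 1) * m := by
                  apply mul_le_mul_of_nonneg_right _ (le_of_lt hm0)
                  exact mul_le_mul_of_nonneg_right this (le_of_lt he1)
              _ = 1 * m := by field_simp
            
          linarith
      have hsup_nn : 0 ≤ (⨆ l : {l : ℝ // 0 ≤ l},
          |Real.exp (-s * l.1) - Real.exp (-s' * l.1)|) := by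
        apply Real.iSup_nonneg
        intro l
        exact abs_nonneg _
      rw [Real.norm_eq_abs, abs_of_nonneg (sq_nonneg _)]
      exact pow_le_pow_left₀ hsup_nn hsup_le 2
    have hnorm := intervalIntegral.norm_integral_le_of_norm_le_const hbound
    have hba : |b - a| = τ := by
      rw [abs_of_nonneg (by linarith)]
      simp only [ha, hb]; ring
    rw [hba] at hnorm
    have hCk : C k = B^2 := by rw [hC, hBdef]
    calc (∫ t in a..b,
        (⨆ l : {l : ℝ // 0 ≤ l},
          |Real.exp (-(t - (j : ℝ) * τ) * l.1) -
            Real.exp (-(b - (j : ℝ) * τ) * l.1)|) ^ 2)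
        ≤ ‖(∫ t in a..b,
        (⨆ l : {l : ℝ // 0 ≤ l},
          |Real.exp (-(t - (j : ℝ) * τ) * l.1) -
            Real.exp (-(b - (j : ℝ) * τ) * l.1)|) ^ 2)‖ := le_abs_self _
      _ ≤ B^2 * τ := hnorm
      _ = C k * τ := by rw [hCk]
  -- sum of C bound
  have hCsum : ∑ k ∈ Finset.Ico j J, C k ≤ 2 := by
    rw [Finset.sum_Ico_eq_sum_range]
    obtain ⟨M, hM⟩ : ∃ M, J - j = M + 1 := ⟨J - j - 1, by omega⟩
    rw [hM, Finset.sum_range_succ']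
    have h0 : C (j + 0) = 1 := by simp [hC]
    rw [h0]
    have hle : ∀ i ∈ Finset.range M, C (j + (i + 1)) ≤ (1/4) * (1/((i:ℝ)+1)^2) := by
      intro i _
      have hne : j + (i+1) ≠ j := by omega
      rw [hC]
      simp only [hne, if_false]
      have hcast : ((j + (i+1) : ℕ):ℝ) - (j:ℝ) = (i:ℝ)+1 := by push_cast; ring
      rw [hcast]
      have hi1 : (0:ℝ) < (i:ℝ)+1 := by positivity
      have h1 : 1/(Real.exp 1 * ((i:ℝ)+1)) ≤ 1/(2*((i:ℝ)+1)) := by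
        apply div_le_div_of_nonneg_left (by norm_num) (by positivity)
        nlinarith
      have h2 : (0:ℝ) ≤ 1/(Real.exp 1 * ((i:ℝ)+1)) := by positivity
      calc (1/(Real.exp 1 * ((i:ℝ)+1)))^2 ≤ (1/(2*((i:ℝ)+1)))^2 :=
            pow_le_pow_left₀ h2 h1 2
        _ = (1/4) * (1/((i:ℝ)+1)^2) := by field_simp; ring
    have hsum2 : ∑ i ∈ Finset.range M, C (j + (i + 1)) ≤
        (1/4) * ∑ i ∈ Finset.range M, (1:ℝ)/((i:ℝ)+1)^2 := by
      rw [Finset.mul_sum]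
      exact Finset.sum_le_sum hle
    have := aux_sq_sum M
    nlinarith
  calc ∑ k ∈ Finset.Ico j J,
        (∫ t in ((k : ℝ) * τ)..(((k : ℝ) + 1) * τ),
          (⨆ l : {l : ℝ // 0 ≤ l},
            |Real.exp (-(t - (j : ℝ) * τ) * l.1) -
              Real.exp (-((((k : ℝ) + 1) * τ) - (j : ℝ) * τ) * l.1)|) ^ 2)
      ≤ ∑ k ∈ Finset.Ico j J, C k * τ := Finset.sum_le_sum hterm
    _ = (∑ k ∈ Finset.Ico j J, C k) * τ := by rw [Finset.sum_mul]
    _ ≤ 2 * τ := by nlinarith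
end

section
/- There exists an absolute constant c > 0 such that for every τ > 0 and every positive integer N, ∑_{m=1}^{N} ( sup_{λ ≥ 0} | e^{−mτλ} − (1+τλ)^{−m} | )² ≤ c; equivalently, ∑_{m=1}^{N} τ·( sup_{λ ≥ 0} | e^{−mτλ} − (1+τλ)^{−m} | )² ≤ c·τ. (This is the scalar-spectral form of the estimate ∑_{k=j}^{J−1} τ ‖e^{(t_{k+1}−t_j)A} − (I−τA)^{−(k−j+1)}‖_{𝓛(H)}² ≤ cτ, which follows from the rational-approximation bound sup_{x ≥ 0} |e^{−mx} − (1+x)^{−m}| ≤ c/m.) -/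
open scoped BigOperators

-- b^(m+1) - a^(m+1) ≤ (m+1) * b^m * (b - a)
lemma aux_pow_sub_pow (a b : ℝ) (ha : 0 ≤ a) (hab : a ≤ b) :
    ∀ m : ℕ, b ^ (m+1) - a ^ (m+1) ≤ (m+1) * b ^ m * (b - a) := by
  intro m
  induction m with
  | zero => simp
  | succ n ih =>
    have hb : 0 ≤ b := ha.trans hab
    have h1 : b ^ (n+2) - a ^ (n+2) = b * (b ^ (n+1) - a ^ (n+1)) + a ^ (n+1) * (b - a) := by
      ring
    have h2 : a ^ (n+1) ≤ b ^ (n+1) := pow_le_pow_left₀ ha hab _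
    have h3 : b * (b ^ (n+1) - a ^ (n+1)) ≤ b * ((n+1) * b ^ n * (b - a)) :=
      mul_le_mul_of_nonneg_left ih hb
    have h4 : a ^ (n+1) * (b - a) ≤ b ^ (n+1) * (b - a) :=
      mul_le_mul_of_nonneg_right h2 (by linarith)
    have : b * ((n+1) * b ^ n * (b - a)) + b ^ (n+1) * (b - a)
        = ((n:ℝ)+1+1) * b ^ (n+1) * (b - a) := by ring
    push_cast
    nlinarith [h3, h4]

-- binomial lower bound: for 4 ≤ m, (1+x)^m ≥ 1 + C(m,4) x^4
lemma aux_binom (m : ℕ) (hm : 4 ≤ m) (x : ℝ) (hx : 0 ≤ x) :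
    1 + (m.choose 4 : ℝ) * x ^ 4 ≤ (1 + x) ^ m := by
  have h := add_pow x 1 m
  have h1 : (1 + x) ^ m = ∑ k ∈ Finset.range (m+1), x ^ k * (m.choose k : ℝ) := by
    rw [add_comm, h]; congr 1; ext k; ring_nf
  rw [h1]
  have hsub : ({0, 4} : Finset ℕ) ⊆ Finset.range (m+1) := by
    intro k hk
    simp only [Finset.mem_insert, Finset.mem_singleton] at hk
    rcases hk with rfl | rfl <;> simp <;> omega
  have := Finset.sum_le_sum_of_subset_of_nonneg hsub
    (fun i _ _ => by positivity : ∀ i ∈ Finset.range (m+1), i ∉ ({0,4} : Finset ℕ) →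
      0 ≤ x ^ i * (m.choose i : ℝ))
  refine le_trans (le_of_eq ?_) this
  rw [Finset.sum_insert (by simp), Finset.sum_singleton]
  simp [mul_comm]

lemma aux_choose (m : ℕ) (hm : 6 ≤ m) : (m : ℝ) ^ 4 ≤ 192 * (m.choose 4 : ℝ) := by
  have h : m ^ 4 ≤ 192 * m.choose 4 := by
    have hd : m.descFactorial 4 = 24 * m.choose 4 := by
      rw [Nat.descFactorial_eq_factorial_mul_choose]; norm_num [Nat.factorial]
    obtain ⟨k, rfl⟩ : ∃ k, m = k + 6 := ⟨m - 6, by omega⟩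
    have hd2 : (k+6).descFactorial 4 = (k+6)*(k+5)*(k+4)*(k+3) := by
      simp [Nat.descFactorial_succ, Nat.descFactorial_zero,
        show k+6-1 = k+5 from rfl, show k+5-1 = k+4 from rfl, show k+4-1 = k+3 from rfl]
      ring
    calc (k+6)^4 ≤ 8 * ((k+6)*(k+5)*(k+4)*(k+3)) := by nlinarith
      _ = 8 * ((k+6).descFactorial 4) := by rw [hd2]
      _ = 192 * (k+6).choose 4 := by rw [hd]; ring
  exact_mod_cast h

lemma aux_key (m : ℕ) (hm : 1 ≤ m) (x : ℝ) (hx : 0 ≤ x) :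
    |Real.exp (-((m : ℝ) * x)) - ((1 + x) ^ m)⁻¹| ≤ 7 / m := by
  have hx1 : (0:ℝ) < 1 + x := by linarith
  set a := Real.exp (-x) with ha
  set b := (1 + x)⁻¹ with hb
  have ha0 : 0 < a := Real.exp_pos _
  have hb0 : 0 < b := by positivity
  have hb1 : b ≤ 1 := by
    rw [hb]; rw [inv_le_one_iff₀]; right; linarith
  have hab : a ≤ b := by
    rw [ha, hb, Real.exp_neg]
    exact inv_anti₀ hx1 (by linarith [Real.add_one_le_exp x])
  have hexp : Real.exp (-((m : ℝ) * x)) = a ^ m := by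
    rw [ha, ← Real.exp_nat_mul]; ring_nf
  have hinv : ((1 + x) ^ m)⁻¹ = b ^ m := by rw [hb, inv_pow]
  have habm : a ^ m ≤ b ^ m := pow_le_pow_left₀ ha0.le hab m
  rw [hexp, hinv, abs_of_nonpos (by linarith), neg_sub]
  have hm0 : (0:ℝ) < m := by exact_mod_cast hm
  by_cases hm7 : m ≤ 7
  · have h1 : b ^ m ≤ 1 := pow_le_one₀ hb0.le hb1
    have h2 : 0 ≤ a ^ m := by positivity
    have : (1:ℝ) ≤ 7 / m := by
      rw [le_div_iff₀ hm0]; exact_mod_cast by linarith [show (m:ℝ) ≤ 7 by exact_mod_cast hm7]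
    linarith
  · -- m ≥ 8
    push_neg at hm7
    obtain ⟨n, rfl⟩ : ∃ n, m = n + 1 := ⟨m - 1, by omega⟩
    have hkey := aux_pow_sub_pow a b ha0.le hab n
    have hba : b - a ≤ x ^ 2 * b := by
      have h1 : 1 - x ≤ a := by
        have := Real.add_one_le_exp (-x); rw [ha]; linarith
      have h2 : b - (1 - x) = x ^ 2 * b := by
        rw [hb]; field_simp; ring
      linarith
    have hchain : b ^ (n+1) - a ^ (n+1) ≤ ((n:ℝ)+1) * x ^ 2 * b ^ (n+1) := by
      calc b ^ (n+1) - a ^ (n+1) ≤ ((n:ℝ)+1) * b ^ n * (b - a) := hkey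
        _ ≤ ((n:ℝ)+1) * b ^ n * (x ^ 2 * b) := by
            apply mul_le_mul_of_nonneg_left hba; positivity
        _ = ((n:ℝ)+1) * x ^ 2 * b ^ (n+1) := by ring
    refine hchain.trans ?_
    -- show (n+1) x² b^(n+1) ≤ 7/(n+1), i.e. (n+1)² x² ≤ 7 (1+x)^(n+1)
    set M := n + 1 with hM
    have hM6 : 6 ≤ M := by omega
    have hbin := aux_binom M (by omega) x hx
    have hch := aux_choose M hM6
    have hMpos : (0:ℝ) < M := by exact_mod_cast (by omega : 0 < M)
    have hpowpos : (0:ℝ) < (1 + x) ^ M := by positivity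
    rw [show ((n:ℝ)+1) = (M:ℝ) by push_cast [hM]; ring]
    have hgoal : (M:ℝ) ^ 2 * x ^ 2 ≤ 7 * (1 + x) ^ M := by
      have h192 : (M:ℝ) ^ 4 / 192 ≤ (M.choose 4 : ℝ) := by linarith
      have key2 : (M:ℝ) ^ 2 * x ^ 2 ≤ 7 * (1 + ((M:ℝ) ^ 4 / 192) * x ^ 4) := by
        nlinarith [sq_nonneg ((M:ℝ) ^ 2 * x ^ 2 - 96 / 7), sq_nonneg ((M:ℝ) * x)]
      have : 7 * (1 + ((M:ℝ) ^ 4 / 192) * x ^ 4) ≤ 7 * (1 + (M.choose 4 : ℝ) * x ^ 4) := by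
        nlinarith [pow_nonneg hx 4]
      linarith [mul_le_mul_of_nonneg_left hbin (by norm_num : (0:ℝ) ≤ 7)]
    have hb' : b ^ M = ((1 + x) ^ M)⁻¹ := by rw [hb, inv_pow]
    rw [hb', le_div_iff₀ hMpos, mul_comm]
    calc (M:ℝ) * ((M:ℝ) * x ^ 2 * ((1+x)^M)⁻¹)
        = ((M:ℝ)^2 * x^2) * ((1+x)^M)⁻¹ := by ring
      _ ≤ (7 * (1+x)^M) * ((1+x)^M)⁻¹ := by
          apply mul_le_mul_of_nonneg_right hgoal; positivity
      _ = 7 := by field_simp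

lemma aux_sup (m : ℕ) (hm : 1 ≤ m) (τ : ℝ) (hτ : 0 < τ) :
    (⨆ l : {l : ℝ // 0 ≤ l},
      |Real.exp (-(m : ℝ) * τ * l.1) - ((1 + τ * l.1) ^ m)⁻¹|) ≤ 7 / m := by
  have : Nonempty {l : ℝ // 0 ≤ l} := ⟨⟨0, le_rfl⟩⟩
  apply ciSup_le
  intro l
  have := aux_key m hm (τ * l.1) (mul_nonneg hτ.le l.2)
  rw [show -(m:ℝ) * τ * l.1 = -(m * (τ * l.1)) by ring]
  exact this

lemma aux_sup_nonneg (m : ℕ) (τ : ℝ) :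
    0 ≤ (⨆ l : {l : ℝ // 0 ≤ l},
      |Real.exp (-(m : ℝ) * τ * l.1) - ((1 + τ * l.1) ^ m)⁻¹|) :=
  Real.iSup_nonneg fun l => abs_nonneg _

lemma aux_sum (N : ℕ) (hN : 0 < N) :
    ∑ m ∈ Finset.Icc 1 N, (7 / (m:ℝ)) ^ 2 ≤ 98 := by
  have h1 : Finset.Icc 1 N = insert 1 (Finset.Ioc 1 N) := by
    rw [Finset.Icc_eq_cons_Ioc hN, Finset.cons_eq_insert]
  rw [h1, Finset.sum_insert (by simp)]
  have h2 : ∑ m ∈ Finset.Ioc 1 N, (7 / (m:ℝ)) ^ 2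
      = 49 * ∑ m ∈ Finset.Ioc 1 N, ((m:ℝ) ^ 2)⁻¹ := by
    rw [Finset.mul_sum]; congr 1; ext m; rw [div_pow]; ring
  rw [h2]
  rcases le_or_gt 1 N with h | h
  · have := sum_Ioc_inv_sq_le_sub (k := 1) (n := N) (α := ℝ) one_ne_zero h
    have hN0 : (0:ℝ) ≤ (N:ℝ)⁻¹ := by positivity
    norm_num at this ⊢
    nlinarith
  · omega

/-- There is an absolute constant `c > 0` such that for every `τ > 0` and
every positive integer `N`, `∑_{m=1}^{N} (sup_{λ≥0} |e^{−mτλ} − (1+τλ)^{−m}|)² ≤ c`;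
equivalently `∑_{m=1}^{N} τ·(sup_{λ≥0} |e^{−mτλ} − (1+τλ)^{−m}|)² ≤ c·τ`. -/
theorem stmt11 :
    ∃ c : ℝ, 0 < c ∧
      ∀ (τ : ℝ), 0 < τ → ∀ (N : ℕ), 0 < N →
        (∑ m ∈ Finset.Icc 1 N,
          (⨆ l : {l : ℝ // 0 ≤ l},
            |Real.exp (-(m : ℝ) * τ * l.1) - ((1 + τ * l.1) ^ m)⁻¹|) ^ 2) ≤ c ∧
        (∑ m ∈ Finset.Icc 1 N,
          τ * (⨆ l : {l : ℝ // 0 ≤ l},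
            |Real.exp (-(m : ℝ) * τ * l.1) - ((1 + τ * l.1) ^ m)⁻¹|) ^ 2) ≤ c * τ := by
  refine ⟨98, by norm_num, fun τ hτ N hN => ?_⟩
  have hmain : (∑ m ∈ Finset.Icc 1 N,
      (⨆ l : {l : ℝ // 0 ≤ l},
        |Real.exp (-(m : ℝ) * τ * l.1) - ((1 + τ * l.1) ^ m)⁻¹|) ^ 2) ≤ 98 := by
    refine le_trans (Finset.sum_le_sum fun m hm => ?_) (aux_sum N hN)
    have hm1 : 1 ≤ m := (Finset.mem_Icc.mp hm).1
    exact pow_le_pow_left₀ (aux_sup_nonneg m τ) (aux_sup m hm1 τ hτ) 2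
  refine ⟨hmain, ?_⟩
  rw [← Finset.mul_sum, mul_comm (98:ℝ) τ]
  exact mul_le_mul_of_nonneg_left hmain hτ.le
end

section
/- The set S := { δ·w : w ∈ L²(Ω,𝓖;H) } is a closed linear subspace of L²(Ω;H), and for every v ∈ L²(Ω;H) the element δ·𝓘_τ v is the orthogonal projection of v onto S; that is, δ·𝓘_τ v ∈ S and E⟨v − δ·𝓘_τ v, s⟩_H = 0 for every s ∈ S. -/
open MeasureTheory ProbabilityTheory
open scoped RealInnerProductSpace

section AuxStmt14

variable {Ω : Type*} {mΩ : MeasurableSpace Ω} {μ : Measure Ω}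
  {G : MeasurableSpace Ω}

lemma stmt14_indepFun {β : Type*} [MeasurableSpace β] {δ : Ω → ℝ}
    (hind : Indep (MeasurableSpace.comap δ inferInstance) G μ)
    {g : Ω → β} (hg : Measurable[G] g) : IndepFun δ g μ :=
  (IndepFun_iff_Indep δ g μ).mpr
    (indep_of_indep_of_le_right hind (measurable_iff_comap_le.mp hg))

lemma stmt14_integral_sq_mul {δ : Ω → ℝ} (τ : ℝ)
    (hind : Indep (MeasurableSpace.comap δ inferInstance) G μ)
    (hδ2 : Integrable (fun ω => δ ω ^ 2) μ) (hvar : ∫ ω, δ ω ^ 2 ∂μ = τ)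
    {g : Ω → ℝ} (hg : Measurable[G] g) (hgi : Integrable g μ) :
    Integrable (fun ω => δ ω ^ 2 * g ω) μ ∧
      ∫ ω, δ ω ^ 2 * g ω ∂μ = τ * ∫ ω, g ω ∂μ := by
  have h1 : IndepFun (fun ω => δ ω ^ 2) g μ :=
    (stmt14_indepFun hind hg).comp (measurable_id.pow_const 2) measurable_id
  have h2 : Integrable ((fun ω => δ ω ^ 2) * g) μ := h1.integrable_mul hδ2 hgi
  have h3 := h1.integral_mul_eq_mul_integral hδ2.aestronglyMeasurable hgi.aestronglyMeasurable
  refine ⟨h2, ?_⟩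
  have h4 : ∫ ω, δ ω ^ 2 * g ω ∂μ = ∫ ω, ((fun ω => δ ω ^ 2) * g) ω ∂μ := rfl
  rw [h4]
  rw [show ((fun ω => δ ω ^ 2) * g) = fun ω => ((fun ω => δ ω ^ 2) * g) ω from rfl] at h3
  rw [h3, hvar]

end AuxStmt14

/-- The set `S := {δ·w : w ∈ L²(Ω,𝓖;H)}` is a closed linear subspace of
`L²(Ω;H)`, and for every `v ∈ L²(Ω;H)` the element `δ·𝓘_τ v` (with
`𝓘_τ v := τ⁻¹ E[δ·v|𝓖]`) is the orthogonal projection of `v` onto `S`: it belongs to `S`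
and `E⟨v − δ·𝓘_τ v, s⟩ = 0` for every `s ∈ S`. -/
theorem stmt14
    {Ω : Type*} {mΩ : MeasurableSpace Ω} {μ : Measure Ω} [IsProbabilityMeasure μ]
    {G : MeasurableSpace Ω} (hG : G ≤ mΩ)
    {H : Type*} [NormedAddCommGroup H] [InnerProductSpace ℝ H] [CompleteSpace H]
    [SecondCountableTopology H]
    (τ : ℝ) (hτ : 0 < τ)
    (δ : Ω → ℝ) (hδ : MemLp δ 2 μ)
    (hind : Indep (MeasurableSpace.comap δ inferInstance) G μ)
    (hmean : ∫ ω, δ ω ∂μ = 0) (hvar : ∫ ω, (δ ω) ^ 2 ∂μ = τ) :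
    ∃ S : Set (Lp H 2 μ),
      S = {f : Lp H 2 μ | ∃ w : Ω → H, MemLp w 2 μ ∧ AEStronglyMeasurable[G] w μ ∧
            (f : Ω → H) =ᵐ[μ] fun ω => δ ω • w ω} ∧
      (∃ S' : Submodule ℝ (Lp H 2 μ), (S' : Set (Lp H 2 μ)) = S) ∧
      IsClosed S ∧
      ∀ v : Ω → H, MemLp v 2 μ →
        ((∃ g ∈ S, (g : Ω → H) =ᵐ[μ]
            fun ω => δ ω • (τ⁻¹ • μ[fun ω' => δ ω' • v ω' | G]) ω) ∧
          ∀ s ∈ S, ∫ ω,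
            ⟪v ω - δ ω • (τ⁻¹ • μ[fun ω' => δ ω' • v ω' | G]) ω, (s : Ω → H) ω⟫ ∂μ = 0) := by
  classical
  letI : MeasurableSpace Ω := mΩ
  haveI : Fact (G ≤ mΩ) := ⟨hG⟩
  haveI : Fact ((1 : ENNReal) ≤ 2) := ⟨one_le_two⟩
  have hτ0 : τ ≠ 0 := ne_of_gt hτ
  have hδ2i : Integrable (fun ω => δ ω ^ 2) μ := hδ.integrable_sq
  -- `δ • w ∈ L²` for `G`-measurable `w ∈ L²`
  have key : ∀ w : Ω → H, MemLp w 2 μ → StronglyMeasurable[G] w →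
      MemLp (fun ω => δ ω • w ω) 2 μ := by
    intro w hw hwG
    have hsm : AEStronglyMeasurable (fun ω => δ ω • w ω) μ := hδ.1.smul hw.1
    rw [memLp_two_iff_integrable_sq_norm hsm]
    have hnormsq : Integrable (fun ω => ‖w ω‖ ^ 2) μ :=
      (memLp_two_iff_integrable_sq_norm hw.1).mp hw
    have hmeas : Measurable[G] fun ω => ‖w ω‖ ^ 2 :=
      (hwG.norm.measurable).pow_const 2
    have := (stmt14_integral_sq_mul τ hind hδ2i hvar hmeas hnormsq).1
    refine this.congr (Filter.Eventually.of_forall fun ω => ?_)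
    simp [norm_smul, mul_pow, sq_abs]
  have key2 : ∀ w : Ω → H, MemLp w 2 μ → AEStronglyMeasurable[G] w μ →
      MemLp (fun ω => δ ω • w ω) 2 μ := by
    intro w hw hwG
    have h1 := key (hwG.mk w) (MemLp.ae_eq hwG.ae_eq_mk hw) hwG.stronglyMeasurable_mk
    refine MemLp.ae_eq ?_ h1
    filter_upwards [hwG.ae_eq_mk] with ω h
    rw [h]
  -- inner products of such elements
  have keyInner : ∀ w u : Ω → H, MemLp w 2 μ → StronglyMeasurable[G] w →
      MemLp u 2 μ → StronglyMeasurable[G] u →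
      Integrable (fun ω => δ ω ^ 2 * ⟪w ω, u ω⟫) μ ∧
        ∫ ω, δ ω ^ 2 * ⟪w ω, u ω⟫ ∂μ = τ * ∫ ω, ⟪w ω, u ω⟫ ∂μ := by
    intro w u hw hwG hu huG
    have hint : Integrable (fun ω => ⟪w ω, u ω⟫) μ := by
      have h := L2.integrable_inner (𝕜 := ℝ) (hw.toLp w) (hu.toLp u)
      refine h.congr ?_
      filter_upwards [hw.coeFn_toLp, hu.coeFn_toLp] with ω h1 h2
      rw [h1, h2]
    exact stmt14_integral_sq_mul τ hind hδ2i hvar ((hwG.inner huG).measurable) hint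
  have keyInner2 : ∀ w u : Ω → H, MemLp w 2 μ → AEStronglyMeasurable[G] w μ →
      MemLp u 2 μ → AEStronglyMeasurable[G] u μ →
      ∫ ω, ⟪δ ω • w ω, δ ω • u ω⟫ ∂μ = τ * ∫ ω, ⟪w ω, u ω⟫ ∂μ := by
    intro w u hw hwG hu huG
    have h := (keyInner (hwG.mk w) (huG.mk u) (MemLp.ae_eq hwG.ae_eq_mk hw)
      hwG.stronglyMeasurable_mk (MemLp.ae_eq huG.ae_eq_mk hu) huG.stronglyMeasurable_mk).2
    have e1 : ∫ ω, ⟪δ ω • w ω, δ ω • u ω⟫ ∂μ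
        = ∫ ω, δ ω ^ 2 * ⟪hwG.mk w ω, huG.mk u ω⟫ ∂μ := by
      refine integral_congr_ae ?_
      filter_upwards [hwG.ae_eq_mk, huG.ae_eq_mk] with ω h1 h2
      rw [h1, h2, real_inner_smul_left, real_inner_smul_right, ← mul_assoc, ← sq]
    have e2 : ∫ ω, ⟪w ω, u ω⟫ ∂μ = ∫ ω, ⟪hwG.mk w ω, huG.mk u ω⟫ ∂μ := by
      refine integral_congr_ae ?_
      filter_upwards [hwG.ae_eq_mk, huG.ae_eq_mk] with ω h1 h2
      rw [h1, h2]
    rw [e1, e2, h]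
  -- the set S
  obtain ⟨K, hK⟩ : ∃ S' : Submodule ℝ (Lp H 2 μ), (S' : Set (Lp H 2 μ)) =
      {f : Lp H 2 μ | ∃ w : Ω → H, MemLp w 2 μ ∧ AEStronglyMeasurable[G] w μ ∧
        (f : Ω → H) =ᵐ[μ] fun ω => δ ω • w ω} := by
    refine ⟨{  carrier := {f : Lp H 2 μ | ∃ w : Ω → H, MemLp w 2 μ ∧
                  AEStronglyMeasurable[G] w μ ∧
                  (f : Ω → H) =ᵐ[μ] fun ω => δ ω • w ω}
               add_mem' := ?_
               zero_mem' := ?_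
               smul_mem' := ?_ }, rfl⟩
    · rintro a b ⟨wa, hwa, hwaG, ha⟩ ⟨wb, hwb, hwbG, hb⟩
      refine ⟨wa + wb, hwa.add hwb, hwaG.add hwbG, ?_⟩
      filter_upwards [Lp.coeFn_add a b, ha, hb] with ω h1 h2 h3
      simp only [h1, Pi.add_apply, h2, h3, smul_add]
    · refine ⟨0, MemLp.zero, ?_, ?_⟩
      · exact (stronglyMeasurable_const (b := (0 : H))).aestronglyMeasurable
      · filter_upwards [Lp.coeFn_zero (E := H) (p := 2) (μ := μ)] with ω h
        simp [h]
    · rintro c f ⟨w, hw, hwG, hf⟩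
      refine ⟨c • w, hw.const_smul c, hwG.const_smul c, ?_⟩
      filter_upwards [Lp.coeFn_smul c f, hf] with ω h1 h2
      simp only [h1, Pi.smul_apply, h2, smul_comm c (δ ω)]
  -- the map T : lpMeas → Lp
  have hT : ∀ f : lpMeas H ℝ G 2 μ,
      MemLp (fun ω => δ ω • ((f : Lp H 2 μ) : Ω → H) ω) 2 μ :=
    fun f => key2 _ (Lp.memLp (f : Lp H 2 μ)) (lpMeas.aestronglyMeasurable f)
  set T : lpMeas H ℝ G 2 μ → Lp H 2 μ := fun f => (hT f).toLp _ with hTdef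
  have hTcoe : ∀ f : lpMeas H ℝ G 2 μ,
      (T f : Ω → H) =ᵐ[μ] fun ω => δ ω • ((f : Lp H 2 μ) : Ω → H) ω :=
    fun f => (hT f).coeFn_toLp
  -- inner product identity for T
  have hTinner : ∀ x y : lpMeas H ℝ G 2 μ,
      (inner ℝ (T x) (T y) : ℝ) = τ * inner ℝ ((x : Lp H 2 μ)) ((y : Lp H 2 μ)) := by
    intro x y
    rw [L2.inner_def, L2.inner_def]
    have e1 : ∫ ω, ⟪(T x : Ω → H) ω, (T y : Ω → H) ω⟫ ∂μ
        = ∫ ω, ⟪δ ω • ((x : Lp H 2 μ) : Ω → H) ω, δ ω • ((y : Lp H 2 μ) : Ω → H) ω⟫ ∂μ := by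
      refine integral_congr_ae ?_
      filter_upwards [hTcoe x, hTcoe y] with ω h1 h2
      rw [h1, h2]
    rw [e1]
    exact keyInner2 _ _ (Lp.memLp _) (lpMeas.aestronglyMeasurable x) (Lp.memLp _)
      (lpMeas.aestronglyMeasurable y)
  -- distance identity
  have hTdist : ∀ x y : lpMeas H ℝ G 2 μ,
      dist (T x) (T y) = Real.sqrt τ * dist x y := by
    intro x y
    have hsq : ‖T x - T y‖ ^ 2 = τ * ‖x - y‖ ^ 2 := by
      have h1 : (inner ℝ (T x - T y) (T x - T y) : ℝ)
          = τ * inner ℝ ((x : Lp H 2 μ) - (y : Lp H 2 μ)) ((x : Lp H 2 μ) - (y : Lp H 2 μ)) := by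
        rw [inner_sub_left, inner_sub_right, inner_sub_right,
          inner_sub_left, inner_sub_right, inner_sub_right,
          hTinner x x, hTinner x y, hTinner y x, hTinner y y]
        ring
      have h2 : ‖x - y‖ = ‖(x : Lp H 2 μ) - (y : Lp H 2 μ)‖ := rfl
      rw [← real_inner_self_eq_norm_sq, h2, ← real_inner_self_eq_norm_sq]
      exact h1
    have h3 : ‖T x - T y‖ = Real.sqrt τ * ‖x - y‖ := by
      have := congrArg Real.sqrt hsq
      rwa [Real.sqrt_sq (norm_nonneg _), Real.sqrt_mul (le_of_lt hτ),
        Real.sqrt_sq (norm_nonneg _)] at this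
    rw [dist_eq_norm, dist_eq_norm, h3]
  have hsqrtpos : 0 < Real.sqrt τ := Real.sqrt_pos.mpr hτ
  have hlip : LipschitzWith (Real.toNNReal (Real.sqrt τ)) T :=
    LipschitzWith.of_dist_le_mul fun x y => by
      rw [hTdist x y, Real.coe_toNNReal _ (Real.sqrt_nonneg τ)]
  have hanti : AntilipschitzWith (Real.toNNReal (Real.sqrt τ)⁻¹) T := by
    refine antilipschitzWith_iff_le_mul_dist.mpr fun x y => ?_
    rw [hTdist x y, Real.coe_toNNReal _ (le_of_lt (inv_pos.mpr hsqrtpos)),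
      inv_mul_cancel_left₀ (ne_of_gt hsqrtpos)]
  have hrange : Set.range T = (K : Set (Lp H 2 μ)) := by
    rw [hK]
    ext f
    constructor
    · rintro ⟨x, rfl⟩
      exact ⟨_, Lp.memLp _, lpMeas.aestronglyMeasurable x, hTcoe x⟩
    · rintro ⟨w, hw, hwG, hf⟩
      refine ⟨⟨hw.toLp w, ?_⟩, ?_⟩
      · exact mem_lpMeas_iff_aestronglyMeasurable.mpr (hwG.congr hw.coeFn_toLp.symm)
      · refine Lp.ext ?_
        have h1 := hTcoe ⟨hw.toLp w, mem_lpMeas_iff_aestronglyMeasurable.mpr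
          (hwG.congr hw.coeFn_toLp.symm)⟩
        filter_upwards [h1, hw.coeFn_toLp, hf] with ω e1 e2 e3
        simp only [e1, e2, e3]
  have hclosed : IsClosed (K : Set (Lp H 2 μ)) := by
    rw [← hrange]
    exact hanti.isClosed_range hlip.uniformContinuous
  refine ⟨(K : Set (Lp H 2 μ)), hK, ⟨K, rfl⟩, hclosed, ?_⟩
  -- projection part
  haveI : CompleteSpace K := hclosed.completeSpace_coe
  intro v hv
  have hδv_int : Integrable (fun ω => δ ω • v ω) μ := by
    have h := hv.smul (φ := δ) hδ (r := 1)
    exact memLp_one_iff_integrable.mp h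
  set vL : Lp H 2 μ := hv.toLp v with hvLdef
  set g0 : Lp H 2 μ := (K.orthogonalProjectionOnto vL : Lp H 2 μ) with hg0def
  have hg0K : g0 ∈ K := SetLike.coe_mem _
  have hg0S : g0 ∈ {f : Lp H 2 μ | ∃ w : Ω → H, MemLp w 2 μ ∧ AEStronglyMeasurable[G] w μ ∧
      (f : Ω → H) =ᵐ[μ] fun ω => δ ω • w ω} := by rw [← hK]; exact hg0K
  obtain ⟨w₀, hw02, hw0G, hg0⟩ := hg0S
  set w1 : Ω → H := hw0G.mk w₀ with hw1def
  have hw1SM : StronglyMeasurable[G] w1 := hw0G.stronglyMeasurable_mk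
  have hw12 : MemLp w1 2 μ := MemLp.ae_eq hw0G.ae_eq_mk hw02
  have hw1i : Integrable w1 μ := hw12.integrable one_le_two
  have hg1 : (g0 : Ω → H) =ᵐ[μ] fun ω => δ ω • w1 ω := by
    filter_upwards [hg0, hw0G.ae_eq_mk] with ω h1 h2
    rw [h1, h2]
  -- orthogonality against indicators
  have horthA : ∀ A : Set Ω, MeasurableSet[G] A → ∀ X : H,
      ∫ ω in A, ⟪δ ω • v ω, X⟫ ∂μ = τ * ∫ ω in A, ⟪w1 ω, X⟫ ∂μ := by
    intro A hA X
    set u : Ω → H := A.indicator fun _ => X with hudef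
    have huSM : StronglyMeasurable[G] u := stronglyMeasurable_const.indicator hA
    have hu2 : MemLp u 2 μ :=
      memLp_indicator_const 2 (hG A hA) X (Or.inr (measure_ne_top μ A))
    have huG : AEStronglyMeasurable[G] u μ := huSM.aestronglyMeasurable
    set uL : Lp H 2 μ := (key2 u hu2 huG).toLp _ with huLdef
    have huK : uL ∈ K := by
      have : uL ∈ (K : Set (Lp H 2 μ)) := by
        rw [hK]; exact ⟨u, hu2, huG, (key2 u hu2 huG).coeFn_toLp⟩
      exact this
    have horth : (inner ℝ (vL - g0) uL : ℝ) = 0 :=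
      K.starProjection_inner_eq_zero vL uL huK
    have h0 : ∫ ω, ⟪((vL - g0 : Lp H 2 μ) : Ω → H) ω, (uL : Ω → H) ω⟫ ∂μ = 0 := by
      rw [← L2.inner_def]; exact horth
    have hiu1 : Integrable (fun ω => ⟪δ ω • v ω, u ω⟫) μ := by
      have base : Integrable (fun ω => ⟪δ ω • v ω, X⟫) μ := hδv_int.inner_const X
      refine (base.indicator (hG A hA)).congr (Filter.Eventually.of_forall fun ω => ?_)
      by_cases h : ω ∈ A <;>
        simp [hudef, Set.indicator_apply, h]
    have hiu2 : Integrable (fun ω => δ ω ^ 2 * ⟪w1 ω, u ω⟫) μ :=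
      (keyInner w1 u hw12 hw1SM hu2 huSM).1
    have h1 : ∫ ω, (⟪δ ω • v ω, u ω⟫ - δ ω ^ 2 * ⟪w1 ω, u ω⟫) ∂μ = 0 := by
      rw [← h0]
      refine integral_congr_ae ?_
      filter_upwards [Lp.coeFn_sub vL g0, hv.coeFn_toLp, hg1, (key2 u hu2 huG).coeFn_toLp]
        with ω e1 e2 e3 e4
      rw [e1, Pi.sub_apply, e2, e3, e4]
      simp only [inner_sub_left, real_inner_smul_left, real_inner_smul_right]
      ring
    have h2 : ∫ ω, ⟪δ ω • v ω, u ω⟫ ∂μ = τ * ∫ ω, ⟪w1 ω, u ω⟫ ∂μ := by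
      have h3 := integral_sub hiu1 hiu2
      rw [h1] at h3
      have h4 : ∫ ω, ⟪δ ω • v ω, u ω⟫ ∂μ = ∫ ω, δ ω ^ 2 * ⟪w1 ω, u ω⟫ ∂μ := by
        linarith [h3]
      rw [h4, (keyInner w1 u hw12 hw1SM hu2 huSM).2]
    have e5 : ∫ ω, ⟪δ ω • v ω, u ω⟫ ∂μ = ∫ ω in A, ⟪δ ω • v ω, X⟫ ∂μ := by
      rw [← integral_indicator (hG A hA)]
      refine integral_congr_ae (Filter.Eventually.of_forall fun ω => ?_)
      by_cases h : ω ∈ A <;> simp [hudef, Set.indicator_apply, h]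
    have e6 : ∫ ω, ⟪w1 ω, u ω⟫ ∂μ = ∫ ω in A, ⟪w1 ω, X⟫ ∂μ := by
      rw [← integral_indicator (hG A hA)]
      refine integral_congr_ae (Filter.Eventually.of_forall fun ω => ?_)
      by_cases h : ω ∈ A <;> simp [hudef, Set.indicator_apply, h]
    rw [← e5, ← e6]; exact h2
  -- identification of the conditional expectation
  have hcond : (fun ω => τ • w1 ω) =ᵐ[μ] μ[fun ω' => δ ω' • v ω' | G] := by
    refine ae_eq_condExp_of_forall_setIntegral_eq hG hδv_int
      (fun s hs hμs => (hw1i.smul τ).integrableOn)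
      (fun s hs hμs => ?_) ((hw0G.congr hw0G.ae_eq_mk).const_smul τ)
    have hFi : IntegrableOn (fun ω => δ ω • v ω - τ • w1 ω) s μ :=
      (hδv_int.sub (hw1i.smul τ)).integrableOn
    have hF0 : ∫ ω in s, (δ ω • v ω - τ • w1 ω) ∂μ = 0 := by
      refine integral_eq_zero_of_forall_integral_inner_eq_zero ℝ _ hFi fun c => ?_
      have i1 : Integrable (fun ω => ⟪δ ω • v ω, c⟫) (μ.restrict s) :=
        (hδv_int.inner_const c).restrict
      have i2 : Integrable (fun ω => τ * ⟪w1 ω, c⟫) (μ.restrict s) :=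
        (((hw1i.inner_const c).const_mul τ)).restrict
      have e1 : ∫ ω in s, ⟪c, δ ω • v ω - τ • w1 ω⟫ ∂μ
          = ∫ ω in s, (⟪δ ω • v ω, c⟫ - τ * ⟪w1 ω, c⟫) ∂μ := by
        refine integral_congr_ae (Filter.Eventually.of_forall fun ω => ?_)
        simp only [inner_sub_right, real_inner_smul_right, real_inner_smul_left]
        rw [real_inner_comm c (v ω), real_inner_comm c (w1 ω)]
      rw [e1, integral_sub i1 i2, integral_const_mul, horthA s hs c, sub_self]
    have hi1 : IntegrableOn (fun ω => δ ω • v ω) s μ := hδv_int.integrableOn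
    have hi2 : IntegrableOn (fun ω => τ • w1 ω) s μ := (hw1i.smul τ).integrableOn
    have := integral_sub hi1 hi2
    rw [hF0] at this
    exact (sub_eq_zero.mp this.symm).symm
  have hw1c : (fun ω => δ ω • (τ⁻¹ • μ[fun ω' => δ ω' • v ω' | G]) ω)
      =ᵐ[μ] fun ω => δ ω • w1 ω := by
    filter_upwards [hcond] with ω h
    rw [Pi.smul_apply, ← h, smul_smul, smul_smul, mul_assoc, inv_mul_cancel₀ hτ0, mul_one]
  constructor
  · refine ⟨g0, ?_, ?_⟩
    · exact hg0K
    · exact hg1.trans hw1c.symm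
  · intro s hs
    have hsK : s ∈ K := hs
    have horth : (inner ℝ (vL - g0) s : ℝ) = 0 :=
      K.starProjection_inner_eq_zero vL s hsK
    have h0 : ∫ ω, ⟪((vL - g0 : Lp H 2 μ) : Ω → H) ω, (s : Ω → H) ω⟫ ∂μ = 0 := by
      rw [← L2.inner_def]; exact horth
    rw [← h0]
    refine integral_congr_ae ?_
    filter_upwards [Lp.coeFn_sub vL g0, hv.coeFn_toLp, hg1, hw1c] with ω e1 e2 e3 e4
    rw [e1, Pi.sub_apply, e2, e3, e4]
end
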